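/- arXiv:2512.06231 — 7 statements merged into one kernel-verified Lean document; each statement's English description precedes it below -/
import Mathlib

section
/- Let γ ∈ (0,4) and κ > max{4/γ − 1, γ/(4−γ)}. Consider q(x) = (κ/2)x₁² + (1/2)x₂² on ℝ². If the initial point x⁰ satisfies (x₂⁰)² = ((4κ² − γκ(κ+1))/(γ(κ+1) − 4))·(x₁⁰)², then for the iterates x^{k+1} = x^k − γ·α_k ∇q(x^k) with Polyak stepsize α_k = (q(x^k) − q⋆)/‖∇q(x^k)‖², the Polyak stepsize equals α_k = (1/γ)·(2/(κ+1)) at every iteration k. -/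
/-- On the two-dimensional quadratic `q(x) = (κ/2) x₁² + (1/2) x₂²` with minimum value `0`,
if the initial point satisfies `(x₂⁰)² = ((4κ² − γκ(κ+1))/(γ(κ+1) − 4)) (x₁⁰)²`, then the
Polyak stepsize of the γ-scaled Polyak gradient descent equals `(1/γ)(2/(κ+1))` at every
iteration. Coordinates are `a k = x₁^k`, `b k = x₂^k`. -/
theorem polyak_stepsize_constant
    (γ κ : ℝ) (hγ : 0 < γ) (hγ4 : γ < 4)
    (hκ : κ > max (4 / γ - 1) (γ / (4 - γ)))
    (a b : ℕ → ℝ) (ha0 : a 0 ≠ 0)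
    (hinit : (b 0) ^ 2 = ((4 * κ ^ 2 - γ * κ * (κ + 1)) / (γ * (κ + 1) - 4)) * (a 0) ^ 2)
    (α : ℕ → ℝ)
    (hα : ∀ k, α k = (κ / 2 * (a k) ^ 2 + 1 / 2 * (b k) ^ 2 - 0) /
      ((κ * a k) ^ 2 + (b k) ^ 2))
    (hupda : ∀ k, a (k + 1) = a k - γ * α k * (κ * a k))
    (hupdb : ∀ k, b (k + 1) = b k - γ * α k * (b k)) :
    ∀ k, α k = (1 / γ) * (2 / (κ + 1)) := by
  have hκ1 : 4 / γ - 1 < κ := (le_max_left _ _).trans_lt hκ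
  have hκ2 : γ / (4 - γ) < κ := (le_max_right _ _).trans_lt hκ
  have h4γ : 0 < 4 - γ := by linarith
  have hκpos : 0 < κ := lt_trans (div_pos hγ h4γ) hκ2
  have h1 : 4 < γ * (κ + 1) := by
    have := (div_lt_iff₀ hγ).mp (by linarith : 4 / γ < κ + 1)
    linarith [this]
  have h2 : γ < κ * (4 - γ) := (div_lt_iff₀ h4γ).mp hκ2
  have hκne1 : κ ≠ 1 := by
    intro h; rw [h] at h1 h2; linarith
  have hDpos : 0 < γ * (κ + 1) - 4 := by linarith
  have hDne : γ * (κ + 1) - 4 ≠ 0 := ne_of_gt hDpos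
  have hκ1pos : (0:ℝ) < κ + 1 := by linarith
  have hκ1ne : (κ:ℝ) + 1 ≠ 0 := ne_of_gt hκ1pos
  set C : ℝ := (4 * κ ^ 2 - γ * κ * (κ + 1)) / (γ * (κ + 1) - 4) with hC
  have hsum : κ ^ 2 + C ≠ 0 := by
    have heq : κ ^ 2 + C = γ * κ * (κ + 1) * (κ - 1) / (γ * (κ + 1) - 4) := by
      rw [hC]; field_simp; ring
    rw [heq]
    apply div_ne_zero _ hDne
    have h3 : κ - 1 ≠ 0 := sub_ne_zero.mpr hκne1
    exact mul_ne_zero (by positivity) h3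
  have hαeq : ∀ n, a n ≠ 0 → (b n) ^ 2 = C * (a n) ^ 2 → α n = 2 / (γ * (κ + 1)) := by
    intro n han hbn
    have ha2 : (a n) ^ 2 ≠ 0 := pow_ne_zero 2 han
    have hden : (κ * a n) ^ 2 + (b n) ^ 2 ≠ 0 := by
      rw [hbn, (by ring : (κ * a n) ^ 2 + C * (a n) ^ 2 = (κ ^ 2 + C) * (a n) ^ 2)]
      exact mul_ne_zero hsum ha2
    rw [hα n, div_eq_div_iff hden (by positivity : γ * (κ + 1) ≠ 0), hbn, hC]
    field_simp
    ring
  have key : ∀ k, a k ≠ 0 ∧ (b k) ^ 2 = C * (a k) ^ 2 := by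
    intro k
    induction k with
    | zero => exact ⟨ha0, hinit⟩
    | succ n ih =>
      obtain ⟨han, hbn⟩ := ih
      have hαn := hαeq n han hbn
      have haS : a (n + 1) = a n * ((1 - κ) / (κ + 1)) := by
        rw [hupda, hαn]; field_simp; ring
      have hbS : b (n + 1) = b n * ((κ - 1) / (κ + 1)) := by
        rw [hupdb, hαn]; field_simp; ring
      constructor
      · rw [haS]
        exact mul_ne_zero han
          (div_ne_zero (sub_ne_zero.mpr (Ne.symm hκne1)) hκ1ne)
      · rw [haS, hbS, mul_pow, mul_pow, hbn, div_pow, div_pow]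
        ring
  intro k
  obtain ⟨han, hbn⟩ := key k
  rw [hαeq k han hbn]
  field_simp
end

section
/- Let γ ∈ (0,4) and κ > max{4/γ − 1, γ/(4−γ)}. Consider q(x) = (κ/2)x₁² + (1/2)x₂² on ℝ² with the initial point x⁰ satisfying (x₂⁰)² = ((4κ² − γκ(κ+1))/(γ(κ+1) − 4))·(x₁⁰)². Then the iterates of γ-scaled Polyak gradient descent satisfy |x₁^{k+1}/x₁^k| = |x₂^{k+1}/x₂^k| = (κ−1)/(κ+1) and q(x^k) − q⋆ = ((κ−1)/(κ+1))^{2k}·(q(x⁰) − q⋆) for all k ≥ 0. -/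
/-- Theorem: on `q(x) = (κ/2) x₁² + (1/2) x₂²` (minimum value `q⋆ = 0`), with initial point
satisfying `(x₂⁰)² = ((4κ² − γκ(κ+1))/(γ(κ+1) − 4)) (x₁⁰)²`, the γ-scaled Polyak gradient
descent iterates satisfy `|x₁^{k+1}/x₁^k| = |x₂^{k+1}/x₂^k| = (κ−1)/(κ+1)` and
`q(x^k) − q⋆ = ((κ−1)/(κ+1))^{2k} (q(x⁰) − q⋆)` for all `k`. -/
theorem polyak_worst_case_strongly_convex
    (γ κ : ℝ) (hγ : 0 < γ) (hγ4 : γ < 4)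
    (hκ : κ > max (4 / γ - 1) (γ / (4 - γ)))
    (a b : ℕ → ℝ) (ha0 : a 0 ≠ 0)
    (hinit : (b 0) ^ 2 = ((4 * κ ^ 2 - γ * κ * (κ + 1)) / (γ * (κ + 1) - 4)) * (a 0) ^ 2)
    (α : ℕ → ℝ)
    (hα : ∀ k, α k = (κ / 2 * (a k) ^ 2 + 1 / 2 * (b k) ^ 2 - 0) /
      ((κ * a k) ^ 2 + (b k) ^ 2))
    (hupda : ∀ k, a (k + 1) = a k - γ * α k * (κ * a k))
    (hupdb : ∀ k, b (k + 1) = b k - γ * α k * (b k)) :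
    ∀ k, |a (k + 1) / a k| = (κ - 1) / (κ + 1) ∧
      |b (k + 1) / b k| = (κ - 1) / (κ + 1) ∧
      (κ / 2 * (a k) ^ 2 + 1 / 2 * (b k) ^ 2) - 0 =
        ((κ - 1) / (κ + 1)) ^ (2 * k) * ((κ / 2 * (a 0) ^ 2 + 1 / 2 * (b 0) ^ 2) - 0) := by
  have h4γ : 0 < 4 - γ := by linarith
  have hκgt1 : 1 < κ := by
    rcases le_or_gt γ 2 with h | h
    · have h1 : (1:ℝ) ≤ 4 / γ - 1 := by
        rw [le_sub_iff_add_le, le_div_iff₀ hγ]; linarith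
      exact lt_of_le_of_lt (h1.trans (le_max_left _ _)) hκ
    · have h1 : (1:ℝ) ≤ γ / (4 - γ) := by
        rw [le_div_iff₀ h4γ]; linarith
      exact lt_of_le_of_lt (h1.trans (le_max_right _ _)) hκ
  have hκ0 : 0 < κ := by linarith
  have hD : 0 < γ * (κ + 1) - 4 := by
    have h1 : 4 / γ - 1 < κ := lt_of_le_of_lt (le_max_left _ _) hκ
    have h2 : 4 / γ < κ + 1 := by linarith
    rw [div_lt_iff₀ hγ] at h2; nlinarith
  have hN : γ * (κ + 1) < 4 * κ := by
    have h2 : γ / (4 - γ) < κ := lt_of_le_of_lt (le_max_right _ _) hκ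
    rw [div_lt_iff₀ h4γ] at h2; nlinarith
  set c : ℝ := (4 * κ ^ 2 - γ * κ * (κ + 1)) / (γ * (κ + 1) - 4) with hc
  have hcpos : 0 < c := div_pos (by nlinarith) hD
  set r : ℝ := (κ - 1) / (κ + 1) with hr
  have hκ1 : (κ + 1) ≠ 0 := by positivity
  have hrpos : 0 < r := div_pos (by linarith) (by linarith)
  have hceq : c * (γ * (κ + 1) - 4) = 4 * κ ^ 2 - γ * κ * (κ + 1) :=
    div_mul_cancel₀ _ (ne_of_gt hD)
  -- one-step lemma
  have key : ∀ k, a k ≠ 0 → b k ^ 2 = c * a k ^ 2 →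
      a (k + 1) = -r * a k ∧ b (k + 1) = r * b k := by
    intro k hak hbk
    have hden : (κ * a k) ^ 2 + b k ^ 2 ≠ 0 := by
      rw [hbk]; positivity
    have hκ2c : (0:ℝ) < κ ^ 2 + c := by positivity
    have hkc : κ + c = 4 * κ * (κ - 1) / (γ * (κ + 1) - 4) := by
      rw [hc]; field_simp; ring
    have hk2c : κ ^ 2 + c = γ * κ * (κ + 1) * (κ - 1) / (γ * (κ + 1) - 4) := by
      rw [hc]; field_simp; ring
    have hαval : α k = (κ + c) / (2 * (κ ^ 2 + c)) := by
      rw [hα k, hbk,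
        show (κ * a k) ^ 2 + c * a k ^ 2 = (κ ^ 2 + c) * a k ^ 2 from by ring,
        show κ / 2 * a k ^ 2 + 1 / 2 * (c * a k ^ 2) - 0 = (κ + c) / 2 * a k ^ 2 from by ring]
      rw [mul_comm ((κ ^ 2 + c)) (a k ^ 2), ← div_div, mul_div_assoc,
        div_self (pow_ne_zero 2 hak), mul_one, div_div]
    have hγα : γ * α k = 2 / (κ + 1) := by
      have hκm1 : κ - 1 ≠ 0 := by intro h; nlinarith
      rw [hαval, hkc, hk2c]
      rw [eq_div_iff hκ1]
      field_simp [ne_of_gt hD, ne_of_gt hγ, ne_of_gt hκ0, hκm1]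
      ring
    constructor
    · rw [hupda k, show γ * α k * (κ * a k) = (γ * α k) * κ * a k from by ring, hγα, hr]
      field_simp; ring
    · rw [hupdb k, hγα, hr]
      field_simp; ring
  -- invariant
  have inv : ∀ k, a k ≠ 0 ∧ b k ^ 2 = c * a k ^ 2 := by
    intro k
    induction k with
    | zero => exact ⟨ha0, hinit⟩
    | succ n ih =>
      obtain ⟨han, hbn⟩ := ih
      obtain ⟨hA, hB⟩ := key n han hbn
      refine ⟨by rw [hA]; exact mul_ne_zero (by simp [ne_of_gt hrpos]) han, ?_⟩
      rw [hA, hB]; linear_combination r ^ 2 * hbn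
  intro k
  obtain ⟨hak, hbk⟩ := inv k
  obtain ⟨hA, hB⟩ := key k hak hbk
  have hq : ∀ m, (κ / 2 * (a m) ^ 2 + 1 / 2 * (b m) ^ 2) - 0 =
      r ^ (2 * m) * ((κ / 2 * (a 0) ^ 2 + 1 / 2 * (b 0) ^ 2) - 0) := by
    intro m
    induction m with
    | zero => simp
    | succ n ih =>
      obtain ⟨han, hbn⟩ := inv n
      obtain ⟨hA', hB'⟩ := key n han hbn
      rw [hA', hB', show 2 * (n + 1) = 2 * n + 2 from by ring, pow_add]
      linear_combination r ^ 2 * ih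
    
  refine ⟨?_, ?_, hq k⟩
  · rw [hA]
    rw [show -r * a k / a k = -r from by field_simp]
    rw [abs_neg, abs_of_pos hrpos]
  · have hbk0 : b k ≠ 0 := by
      intro h; rw [h] at hbk
      have : a k ^ 2 = 0 := by
        have := hbk.symm
        nlinarith
      exact hak (pow_eq_zero_iff (by norm_num) |>.mp this)
    rw [hB, show r * b k / b k = r from by field_simp]
    exact abs_of_pos hrpos
end

section
/- For γ ∈ (0,4), K ≥ 1 an integer, and L > 0, there exists an L-smooth convex function f: ℝ² → ℝ (namely a scaled quadratic) and an initial point x⁰ such that the iterates of γ-scaled Polyak gradient descent satisfy min_{1≤k≤K} (f(x^k) − f⋆)/(L‖x⁰ − x⋆‖²) ≥ γ/(2e^{2γ}((4−γ)K + γ)). -/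
open scoped RealInnerProductSpace

noncomputable def vec2 (u v : ℝ) : EuclideanSpace ℝ (Fin 2) :=
  (WithLp.equiv 2 (Fin 2 → ℝ)).symm ![u, v]

@[simp] lemma vec2_zero (u v : ℝ) : vec2 u v 0 = u := rfl
@[simp] lemma vec2_one (u v : ℝ) : vec2 u v 1 = v := rfl

noncomputable def qf (a b : ℝ) (x : EuclideanSpace ℝ (Fin 2)) : ℝ :=
  a / 2 * (x 0) ^ 2 + b / 2 * (x 1) ^ 2

open InnerProductSpace in
lemma hasGradientAt_qf (a b : ℝ) (x : EuclideanSpace ℝ (Fin 2)) :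
    HasGradientAt (qf a b) (vec2 (a * x 0) (b * x 1)) x := by
  have p0 := (EuclideanSpace.proj (0 : Fin 2) (𝕜 := ℝ)).hasFDerivAt (x := x)
  have p1 := (EuclideanSpace.proj (1 : Fin 2) (𝕜 := ℝ)).hasFDerivAt (x := x)
  have h := ((p0.mul p0).const_mul (a/2)).add ((p1.mul p1).const_mul (b/2))
  rw [hasGradientAt_iff_hasFDerivAt]
  convert h using 1
  · ext y
    simp [qf]
  · rfl
  · ext y
    simp [qf]; ring
  · refine ContinuousLinearMap.ext fun v => ?_
    simp [toDual_apply_apply, PiLp.inner_apply, Fin.sum_univ_two, RCLike.inner_apply, vec2]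
    ring

lemma gradient_qf (a b : ℝ) (x : EuclideanSpace ℝ (Fin 2)) :
    gradient (qf a b) x = vec2 (a * x 0) (b * x 1) :=
  (hasGradientAt_qf a b x).gradient

lemma differentiable_qf (a b : ℝ) : Differentiable ℝ (qf a b) :=
  fun x => ((hasGradientAt_qf a b x).hasFDerivAt).differentiableAt

lemma norm_sq_eq (y : EuclideanSpace ℝ (Fin 2)) : ‖y‖ ^ 2 = (y 0) ^ 2 + (y 1) ^ 2 := by
  rw [EuclideanSpace.norm_eq, Real.sq_sqrt (by positivity), Fin.sum_univ_two]
  simp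

lemma norm_eq_sqrt (y : EuclideanSpace ℝ (Fin 2)) :
    ‖y‖ = Real.sqrt ((y 0) ^ 2 + (y 1) ^ 2) := by
  rw [← norm_sq_eq]; exact (Real.sqrt_sq (norm_nonneg y)).symm

lemma convexOn_qf {a b : ℝ} (ha : 0 ≤ a) (hb : 0 ≤ b) :
    ConvexOn ℝ Set.univ (qf a b) := by
  refine ⟨convex_univ, fun x _ y _ s t hs ht hst => ?_⟩
  have e0 : (s • x + t • y) 0 = s * x 0 + t * y 0 := rfl
  have e1 : (s • x + t • y) 1 = s * x 1 + t * y 1 := rfl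
  obtain rfl : t = 1 - s := by linarith
  simp only [qf, e0, e1, smul_eq_mul]
  nlinarith [mul_nonneg ha (mul_nonneg (mul_nonneg hs ht) (sq_nonneg (x 0 - y 0))),
    mul_nonneg hb (mul_nonneg (mul_nonneg hs ht) (sq_nonneg (x 1 - y 1)))]

lemma lipschitz_qf {a b L : ℝ} (ha : 0 ≤ a) (haL : a ≤ L) (hb : 0 ≤ b) (hbL : b ≤ L)
    (x y : EuclideanSpace ℝ (Fin 2)) :
    ‖gradient (qf a b) x - gradient (qf a b) y‖ ≤ L * ‖x - y‖ := by
  have hL : 0 ≤ L := le_trans ha haL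
  rw [gradient_qf, gradient_qf]
  have h0 : (vec2 (a * x 0) (b * x 1) - vec2 (a * y 0) (b * y 1)) 0
      = a * (x 0 - y 0) := by simp [vec2]; ring
  have h1 : (vec2 (a * x 0) (b * x 1) - vec2 (a * y 0) (b * y 1)) 1
      = b * (x 1 - y 1) := by simp [vec2]; ring
  have hx0 : (x - y) 0 = x 0 - y 0 := rfl
  have hx1 : (x - y) 1 = x 1 - y 1 := rfl
  rw [norm_eq_sqrt, norm_eq_sqrt, h0, h1, hx0, hx1]
  rw [show L * Real.sqrt ((x 0 - y 0) ^ 2 + (x 1 - y 1) ^ 2)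
      = Real.sqrt (L ^ 2 * ((x 0 - y 0) ^ 2 + (x 1 - y 1) ^ 2)) by
    rw [Real.sqrt_mul (sq_nonneg L), Real.sqrt_sq hL]]
  apply Real.sqrt_le_sqrt
  nlinarith [mul_nonneg (sub_nonneg.2 (mul_le_mul haL haL ha hL)) (sq_nonneg (x 0 - y 0)),
    mul_nonneg (sub_nonneg.2 (mul_le_mul hbL hbL hb hL)) (sq_nonneg (x 1 - y 1))]

lemma qf_min {a b : ℝ} (ha : 0 ≤ a) (hb : 0 ≤ b) (y : EuclideanSpace ℝ (Fin 2)) :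
    qf a b 0 ≤ qf a b y := by
  have : qf a b 0 = 0 := by simp [qf]
  rw [this]; unfold qf; positivity

set_option maxHeartbeats 1000000 in
/-- There exists an `L`-smooth convex function on `ℝ²`, an initial point `x⁰` and a minimizer
`x⋆` such that the iterates of γ-scaled Polyak gradient descent satisfy
`min_{1≤k≤K} (f(x^k) − f⋆)/(L‖x⁰ − x⋆‖²) ≥ γ/(2e^{2γ}((4−γ)K + γ))`. -/
theorem polyak_smooth_convex_lower_bound
    (γ : ℝ) (hγ : 0 < γ) (hγ4 : γ < 4) (K : ℕ) (hK : 1 ≤ K) (L : ℝ) (hL : 0 < L) :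
    ∃ (f : EuclideanSpace ℝ (Fin 2) → ℝ) (x0 xstar : EuclideanSpace ℝ (Fin 2)),
      ConvexOn ℝ Set.univ f ∧ Differentiable ℝ f ∧
      (∀ x y, ‖gradient f x - gradient f y‖ ≤ L * ‖x - y‖) ∧
      (∀ y, f xstar ≤ f y) ∧
      ∀ x : ℕ → EuclideanSpace ℝ (Fin 2), x 0 = x0 →
        (∀ k, x (k + 1) = x k -
          (γ * ((f (x k) - f xstar) / ‖gradient f (x k)‖ ^ 2)) • gradient f (x k)) →
        ∀ k, 1 ≤ k → k ≤ K →
          (f (x k) - f xstar) / (L * ‖x0 - xstar‖ ^ 2) ≥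
            γ / (2 * Real.exp (2 * γ) * ((4 - γ) * K + γ)) := by
  have hγ4' : 0 < 4 - γ := by linarith
  have hKR : (1 : ℝ) ≤ (K : ℝ) := by exact_mod_cast hK
  set D : ℝ := (4 - γ) * K + γ with hDdef
  have hD4 : 4 ≤ D := by nlinarith
  have hDpos : 0 < D := by linarith
  set ε : ℝ := γ * (4 - γ) / (4 * D) with hεdef
  have hε0 : 0 < ε := div_pos (mul_pos hγ hγ4') (by linarith)
  have hε14 : ε ≤ 1 / 4 := by
    rw [hεdef, div_le_iff₀ (by linarith : (0:ℝ) < 4 * D)]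
    nlinarith [sq_nonneg (γ - 2)]
  have hεγ4 : ε ≤ γ / 4 := by
    rw [hεdef, div_le_iff₀ (by linarith : (0:ℝ) < 4 * D)]
    nlinarith
  have hKε : (K : ℝ) * ε ≤ γ / 4 := by
    have h1 : (K : ℝ) * ε = (K : ℝ) * (γ * (4 - γ)) / (4 * D) := by rw [hεdef]; ring
    rw [h1, div_le_div_iff₀ (by linarith : (0:ℝ) < 4 * D) (by norm_num : (0:ℝ) < 4), hDdef]
    nlinarith [sq_nonneg γ]
  have h16 : γ ^ 2 < 4 * D := by nlinarith [mul_lt_mul'' hγ4 hγ4 hγ.le hγ.le]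
  have h16' : (4 - γ) ^ 2 < 4 * D := by
    nlinarith [mul_lt_mul'' (show 4 - γ < 4 by linarith) (show 4 - γ < 4 by linarith) hγ4'.le hγ4'.le]
  have hd : 0 < 4 - γ - γ * ε := by
    have h1 : γ * ε = γ ^ 2 * (4 - γ) / (4 * D) := by rw [hεdef]; ring
    have h2 : γ ^ 2 * (4 - γ) / (4 * D) < 4 - γ := by
      rw [div_lt_iff₀ (by linarith : (0:ℝ) < 4 * D)]
      nlinarith [mul_lt_mul_of_pos_right h16 hγ4']
    linarith [h1 ▸ h2]
  have hnum : 0 < γ - (4 - γ) * ε := by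
    have h1 : (4 - γ) * ε = γ * (4 - γ) ^ 2 / (4 * D) := by rw [hεdef]; ring
    have h2 : γ * (4 - γ) ^ 2 / (4 * D) < γ := by
      rw [div_lt_iff₀ (by linarith : (0:ℝ) < 4 * D)]
      nlinarith [mul_lt_mul_of_pos_right h16' hγ]
    linarith [h1 ▸ h2]
  set r : ℝ := ε * (γ - (4 - γ) * ε) / (4 - γ - γ * ε) with hrdef
  have hr0 : 0 < r := div_pos (mul_pos hε0 hnum) hd
  have key : γ * (1 + ε) * (ε + r) = 4 * (ε ^ 2 + r) := by
    rw [hrdef]; field_simp; ring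
  have hsum : ε + r = 4 * ε * (1 - ε) / (4 - γ - γ * ε) := by
    rw [hrdef, eq_div_iff hd.ne', add_mul, div_mul_cancel₀ _ hd.ne']; ring
  have honer : 1 + r = (4 - γ) * (1 - ε ^ 2) / (4 - γ - γ * ε) := by
    rw [hrdef, eq_div_iff hd.ne', add_mul, div_mul_cancel₀ _ hd.ne']; ring
  set ρ : ℝ := (1 - ε) / (1 + ε) with hρdef
  have hε1 : ε < 1 := by linarith
  have h1ε : (0:ℝ) < 1 + ε := by linarith
  have hρ0 : 0 < ρ := div_pos (by linarith) h1ε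
  have hρ1 : ρ < 1 := by rw [hρdef, div_lt_one h1ε]; linarith
  set s : ℝ := Real.sqrt r with hsdef
  have hs2 : s ^ 2 = r := Real.sq_sqrt hr0.le
  set a : ℝ := ε * L with hadef
  have ha0 : 0 < a := mul_pos hε0 hL
  have haL : a ≤ L := by nlinarith
  refine ⟨qf a L, vec2 1 s, 0, convexOn_qf ha0.le hL.le, differentiable_qf a L,
    fun x y => lipschitz_qf ha0.le haL hL.le le_rfl x y, fun y => qf_min ha0.le hL.le y, ?_⟩
  intro x hx0 hrec k hk1 hkK
  have hq0 : qf a L 0 = 0 := by simp [qf]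
  -- one step of the recursion
  have step : ∀ u v : ℝ, v ^ 2 = r * u ^ 2 → u ≠ 0 →
      vec2 u v - (γ * ((qf a L (vec2 u v) - qf a L 0) / ‖gradient (qf a L) (vec2 u v)‖ ^ 2))
        • gradient (qf a L) (vec2 u v) = vec2 (ρ * u) (-ρ * v) := by
    intro u v hv hu
    rw [gradient_qf, hq0]
    have hval : qf a L (vec2 u v) = a / 2 * u ^ 2 + L / 2 * v ^ 2 := rfl
    have hg0 : vec2 u v 0 = u := rfl
    have hg1 : vec2 u v 1 = v := rfl
    rw [hg0, hg1] at *
    have hnorm : ‖vec2 (a * u) (L * v)‖ ^ 2 = (a * u) ^ 2 + (L * v) ^ 2 := by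
      rw [norm_sq_eq]; simp
    rw [hval, hnorm]
    have hden : (a * u) ^ 2 + (L * v) ^ 2 = L ^ 2 * u ^ 2 * (ε ^ 2 + r) := by
      rw [hadef]; linear_combination L ^ 2 * hv
    have hnum' : a / 2 * u ^ 2 + L / 2 * v ^ 2 - 0 = L * u ^ 2 * (ε + r) / 2 := by
      rw [hadef]; linear_combination (L / 2) * hv
    rw [hden, hnum']
    have hdenpos : (0:ℝ) < L ^ 2 * u ^ 2 * (ε ^ 2 + r) := by positivity
    have ht : γ * (L * u ^ 2 * (ε + r) / 2 / (L ^ 2 * u ^ 2 * (ε ^ 2 + r))) = 2 / (L * (1 + ε)) := by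
      rw [mul_div_assoc', div_eq_div_iff (ne_of_gt hdenpos) (by positivity)]
      linear_combination (L ^ 2 * u ^ 2 / 2) * key
    rw [ht]
    apply PiLp.ext
    intro i
    fin_cases i
    · show u - 2 / (L * (1 + ε)) * (a * u) = ρ * u
      rw [hadef, hρdef]; field_simp; ring
    · show v - 2 / (L * (1 + ε)) * (L * v) = -ρ * v
      rw [hρdef]; field_simp; ring
  have hiter : ∀ n, x n = vec2 (ρ ^ n) ((-ρ) ^ n * s) := by
    intro n
    induction n with
    | zero => rw [hx0, pow_zero, pow_zero, one_mul]
    | succ m ih =>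
      have hsq : ((-ρ) ^ m * s) ^ 2 = r * (ρ ^ m) ^ 2 := by
        rw [mul_pow, ← pow_mul, mul_comm m 2, pow_mul, neg_sq, hs2, ← pow_mul, mul_comm 2 m,
          pow_mul]
        ring
      rw [hrec m, ih, step (ρ ^ m) ((-ρ) ^ m * s) hsq (pow_pos hρ0 m).ne',
        show ρ * ρ ^ m = ρ ^ (m + 1) by ring, show -ρ * ((-ρ) ^ m * s) = (-ρ) ^ (m + 1) * s by ring]
  have hsqk : ((-ρ) ^ k * s) ^ 2 = r * (ρ ^ k) ^ 2 := by
    rw [mul_pow, ← pow_mul, mul_comm k 2, pow_mul, neg_sq, hs2, ← pow_mul, mul_comm 2 k, pow_mul]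
    ring
  have hfx : qf a L (vec2 (ρ ^ k) ((-ρ) ^ k * s)) = L * ((ρ ^ k) ^ 2 * (ε + r)) / 2 := by
    show a / 2 * (ρ ^ k) ^ 2 + L / 2 * ((-ρ) ^ k * s) ^ 2 = _
    rw [hadef, hsqk]; ring
  have hx0norm : ‖vec2 1 s - 0‖ ^ 2 = 1 + r := by
    rw [sub_zero, norm_sq_eq]
    simp [hs2]
  rw [hiter k, hfx, hq0, hx0norm, sub_zero]
  -- the exponential inequality
  have hexp : (1 + ε) ^ (2 * K + 1) ≤ Real.exp (2 * γ) * (1 - ε) ^ (2 * K) := by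
    have h1 : (1 + ε) ^ (2 * K + 1) ≤ Real.exp ((2 * K + 1 : ℕ) * ε) := by
      rw [Real.exp_nat_mul]
      exact pow_le_pow_left₀ (by linarith) (by linarith [Real.add_one_le_exp ε]) _
    have h2 : Real.exp (-(4 / 3 * ε)) ≤ 1 - ε := by
      rw [Real.exp_neg, inv_eq_one_div, div_le_iff₀ (Real.exp_pos _)]
      nlinarith [mul_le_mul_of_nonneg_left (Real.add_one_le_exp (4 / 3 * ε))
        (show (0:ℝ) ≤ 1 - ε by linarith), mul_nonneg hε0.le (show (0:ℝ) ≤ 1 - 4 * ε by linarith)]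
    have h3 : Real.exp ((2 * K : ℕ) * (-(4 / 3 * ε))) ≤ (1 - ε) ^ (2 * K) := by
      rw [Real.exp_nat_mul]
      exact pow_le_pow_left₀ (Real.exp_pos _).le h2 _
    have h4 : Real.exp ((2 * K + 1 : ℕ) * ε) ≤
        Real.exp (2 * γ) * Real.exp ((2 * K : ℕ) * (-(4 / 3 * ε))) := by
      rw [← Real.exp_add, Real.exp_le_exp]
      push_cast
      nlinarith [hKε, hεγ4, hγ]
    calc (1 + ε) ^ (2 * K + 1) ≤ Real.exp ((2 * K + 1 : ℕ) * ε) := h1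
      _ ≤ Real.exp (2 * γ) * Real.exp ((2 * K : ℕ) * (-(4 / 3 * ε))) := h4
      _ ≤ Real.exp (2 * γ) * (1 - ε) ^ (2 * K) :=
          mul_le_mul_of_nonneg_left h3 (Real.exp_pos _).le
  have hρ2K : ρ ^ (2 * K) = (1 - ε) ^ (2 * K) / (1 + ε) ^ (2 * K) := by
    rw [hρdef, div_pow]
  have h5 : 1 + ε ≤ Real.exp (2 * γ) * ρ ^ (2 * K) := by
    rw [hρ2K, ← mul_div_assoc, le_div_iff₀ (pow_pos h1ε (2 * K))]
    calc (1 + ε) * (1 + ε) ^ (2 * K) = (1 + ε) ^ (2 * K + 1) := by ring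
      _ ≤ Real.exp (2 * γ) * (1 - ε) ^ (2 * K) := hexp
  have hεD : 4 * ε * D = γ * (4 - γ) := by
    have h4D : (4:ℝ) * D ≠ 0 := by positivity
    have hre : 4 * (γ * (4 - γ) / (4 * D)) * D = γ * (4 - γ) / (4 * D) * (4 * D) := by ring
    rw [hεdef, hre, div_mul_cancel₀ _ h4D]
  have hmain : γ * (1 + r) ≤ Real.exp (2 * γ) * D * ρ ^ (2 * K) * (ε + r) := by
    calc γ * (1 + r) = (1 + ε) * (4 * ε * (1 - ε) / (4 - γ - γ * ε)) * D := by
          have hnn : γ * ((4 - γ) * (1 - ε ^ 2)) = (1 + ε) * (4 * ε * (1 - ε)) * D := by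
            clear_value ε D
            linear_combination (ε ^ 2 - 1) * hεD
          rw [honer, ← mul_div_assoc, hnn]
          ring
      _ ≤ Real.exp (2 * γ) * ρ ^ (2 * K) * (4 * ε * (1 - ε) / (4 - γ - γ * ε)) * D := by
          exact mul_le_mul_of_nonneg_right (mul_le_mul_of_nonneg_right h5
            (div_nonneg (mul_nonneg (by linarith) (by linarith)) hd.le)) hDpos.le
      _ = Real.exp (2 * γ) * D * ρ ^ (2 * K) * (ε + r) := by rw [hsum]; ring
  have hρk : ρ ^ (2 * K) ≤ (ρ ^ k) ^ 2 := by
    rw [← pow_mul]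
    exact pow_le_pow_of_le_one hρ0.le hρ1.le (by omega)
  rw [ge_iff_le, div_le_div_iff₀ (by positivity) (by positivity)]
  calc γ * (L * (1 + r)) = L * (γ * (1 + r)) := by ring
    _ ≤ L * (Real.exp (2 * γ) * D * ρ ^ (2 * K) * (ε + r)) :=
        mul_le_mul_of_nonneg_left hmain hL.le
    _ ≤ L * (Real.exp (2 * γ) * D * (ρ ^ k) ^ 2 * (ε + r)) := by
        apply mul_le_mul_of_nonneg_left _ hL.le
        apply mul_le_mul_of_nonneg_right (mul_le_mul_of_nonneg_left hρk (by positivity))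
          (by positivity)
    _ = L * ((ρ ^ k) ^ 2 * (ε + r)) / 2 * (2 * Real.exp (2 * γ) * D) := by ring
end

section
/- Let (a_k) be a nonnegative real sequence satisfying a_{k+1} ≤ a_k − c·a_k^τ for all k ≥ 0, where c > 0 and τ > 1, and assume a_0 > 0. Then a_k ≤ (a_0^{1−τ} + (τ−1)·c·k)^{−1/(τ−1)} for all k ≥ 0. -/
open Set
lemma rpow_neg_tangent {q x y : ℝ} (hq : 0 < q) (hy : 0 < y) (hxy : y < x) :
    x ^ (-q) + q * x ^ (-q - 1) * (x - y) ≤ y ^ (-q) := by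
  have hx : 0 < x := hy.trans hxy
  obtain ⟨t, ht, hderiv⟩ := exists_hasDerivAt_eq_slope (fun s => s ^ (-q))
      (fun s => (-q) * s ^ (-q - 1)) hxy
      (fun s hs => by
        have hs0 : s ≠ 0 := ne_of_gt (lt_of_lt_of_le hy hs.1)
        exact (Real.continuousAt_rpow_const s (-q) (Or.inl hs0)).continuousWithinAt)
      (fun s hs => by
        have hs0 : s ≠ 0 := ne_of_gt (hy.trans hs.1)
        simpa using Real.hasDerivAt_rpow_const (p := -q) (Or.inl hs0))
  have ht0 : 0 < t := hy.trans ht.1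
  have htx : x ^ (-q - 1) ≤ t ^ (-q - 1) :=
    Real.rpow_le_rpow_of_nonpos ht0 ht.2.le (by linarith)
  have hxy0 : (0:ℝ) < x - y := by linarith
  have key : x ^ (-q) - y ^ (-q) = -q * t ^ (-q - 1) * (x - y) := by
    have h := hderiv
    field_simp at h
    linarith [h]
  nlinarith [mul_le_mul_of_nonneg_right (mul_le_mul_of_nonneg_left htx hq.le) hxy0.le]

/-- If a nonnegative sequence satisfies `a_{k+1} ≤ a_k − c a_k^τ` with `c > 0`, `τ > 1` and
`a_0 > 0`, then `a_k ≤ (a_0^{1−τ} + (τ−1) c k)^{−1/(τ−1)}` for all `k`. -/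
theorem recursive_sequence_bound
    (a : ℕ → ℝ) (c τ : ℝ) (hc : 0 < c) (hτ : 1 < τ)
    (hnn : ∀ k, 0 ≤ a k) (ha0 : 0 < a 0)
    (hrec : ∀ k, a (k + 1) ≤ a k - c * (a k) ^ τ) :
    ∀ k : ℕ, a k ≤ ((a 0) ^ (1 - τ) + (τ - 1) * c * k) ^ (-(1 / (τ - 1))) := by
  have hq : 0 < τ - 1 := by linarith
  have hBpos : ∀ k : ℕ, 0 < (a 0) ^ (1 - τ) + (τ - 1) * c * k := fun k => by
    have h1 : 0 < (a 0) ^ (1 - τ) := Real.rpow_pos_of_pos ha0 _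
    have h2 : (0:ℝ) ≤ (τ - 1) * c * k := by positivity
    linarith
  have main : ∀ k : ℕ, a k = 0 ∨ (a 0) ^ (1 - τ) + (τ - 1) * c * k ≤ (a k) ^ (1 - τ) := by
    intro k
    induction k with
    | zero => right; simp
    | succ n ih =>
      rcases eq_or_lt_of_le (hnn (n + 1)) with h0 | hpos
      · exact Or.inl h0.symm
      right
      rcases ih with h0 | ih
      · exfalso
        have h := hrec n
        rw [h0, Real.zero_rpow (by linarith : τ ≠ 0)] at h
        simp at h
        linarith
      · have hanpos : 0 < a n := by
          by_contra h
          have hz : a n = 0 := le_antisymm (not_lt.mp h) (hnn n)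
          rw [hz, Real.zero_rpow (by linarith : (1:ℝ) - τ ≠ 0)] at ih
          linarith [hBpos n]
        have hlt : a (n + 1) < a n := by
          have h1 : 0 < c * (a n) ^ τ := by positivity
          linarith [hrec n]
        have tang := rpow_neg_tangent hq hpos hlt
        have hneg : (1 : ℝ) - τ = -(τ - 1) := by ring
        have hstep : (a n) ^ (-(τ-1)) + (τ-1) * c ≤ (a (n + 1)) ^ (-(τ-1)) := by
          have h1 : c * (a n) ^ τ ≤ a n - a (n + 1) := by linarith [hrec n]
          have h2 : (a n) ^ (-(τ-1) - 1) * (a n) ^ τ = 1 := by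
            rw [← Real.rpow_add hanpos]
            rw [show -(τ-1) - 1 + τ = 0 by ring]
            exact Real.rpow_zero _
          have hp : 0 < (a n) ^ (-(τ-1) - 1) := Real.rpow_pos_of_pos hanpos _
          have h3 : (τ-1) * c ≤ (τ-1) * (a n) ^ (-(τ-1) - 1) * (a n - a (n + 1)) := by
            calc (τ-1) * c = (τ-1) * c * ((a n) ^ (-(τ-1) - 1) * (a n) ^ τ) := by rw [h2]; ring
              _ = (τ-1) * (a n) ^ (-(τ-1) - 1) * (c * (a n) ^ τ) := by ring
              _ ≤ (τ-1) * (a n) ^ (-(τ-1) - 1) * (a n - a (n + 1)) :=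
                  mul_le_mul_of_nonneg_left h1 (by positivity)
          linarith [tang]
        rw [hneg] at ih ⊢
        push_cast
        have : (a 0) ^ (-(τ-1)) + (τ - 1) * c * ((n : ℝ) + 1)
            = ((a 0) ^ (-(τ-1)) + (τ - 1) * c * n) + (τ-1) * c := by ring
        rw [this]
        linarith [hstep]
  intro k
  rcases main k with h0 | h
  · rw [h0]
    exact (Real.rpow_pos_of_pos (hBpos k) _).le
  · have hakpos : 0 < a k := by
      by_contra hcon
      have hz : a k = 0 := le_antisymm (not_lt.mp hcon) (hnn k)
      rw [hz, Real.zero_rpow (by linarith : (1:ℝ) - τ ≠ 0)] at h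
      linarith [hBpos k]
    have hexp : -(1 / (τ - 1)) ≤ 0 := by
      have : 0 < 1 / (τ - 1) := by positivity
      linarith
    have hmono := Real.rpow_le_rpow_of_nonpos (hBpos k) h hexp
    have hone : (1 - τ) * (-(1 / (τ - 1))) = 1 := by field_simp; ring
    calc a k = (a k) ^ ((1 - τ) * (-(1 / (τ - 1)))) := by rw [hone, Real.rpow_one]
      _ = ((a k) ^ (1 - τ)) ^ (-(1 / (τ - 1))) := Real.rpow_mul hakpos.le _ _
      _ ≤ _ := hmono
end

section
/- Suppose h: ℝ → ℝ is convex and nondecreasing, g: ℝⁿ → ℝ is differentiable and star-convex with respect to a minimizer x_g⋆ of g (i.e., ⟨∇g(x), x − x_g⋆⟩ ≥ g(x) − g(x_g⋆) for all x), and let f = h ∘ g. Then for any x ∈ ℝⁿ and any ξ ∈ ∂h(g(x)) (subgradient of h at g(x)): ⟨ξ·∇g(x), x − x_g⋆⟩ ≥ f(x) − f(x_g⋆). -/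
open scoped RealInnerProductSpace

/-- Star-convexity of the composition `f = h ∘ g` for `h` convex nondecreasing and `g`
star-convex: for any subgradient `ξ` of `h` at `g(x)`,
`⟨ξ ∇g(x), x − x_g⋆⟩ ≥ f(x) − f(x_g⋆)`. -/
theorem star_convex_composition
    (n : ℕ) (h : ℝ → ℝ) (g : EuclideanSpace ℝ (Fin n) → ℝ)
    (hconv : ConvexOn ℝ Set.univ h) (hmono : Monotone h)
    (hgdiff : Differentiable ℝ g)
    (xg : EuclideanSpace ℝ (Fin n)) (hgmin : ∀ y, g xg ≤ g y)
    (hstar : ∀ x, ⟪gradient g x, x - xg⟫ ≥ g x - g xg)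
    (x : EuclideanSpace ℝ (Fin n)) (ξ : ℝ)
    (hξ : ∀ t, h t ≥ h (g x) + ξ * (t - g x)) :
    ⟪ξ • gradient g x, x - xg⟫ ≥ h (g x) - h (g xg) := by
  have hξ0 : 0 ≤ ξ := by
    have h1 := hξ (g x - 1)
    have h2 := hmono (show g x - 1 ≤ g x by linarith)
    nlinarith
  have h3 : h (g xg) ≥ h (g x) + ξ * (g xg - g x) := hξ (g xg)
  have h4 : ⟪gradient g x, x - xg⟫ ≥ g x - g xg := hstar x
  rw [real_inner_smul_left]
  nlinarith
end

section
/- Suppose f: ℝⁿ → ℝ is convex, differentiable, (ν, L_ν)-Hölder smooth with ν ∈ (0,1], attains its minimum f⋆ at a nonempty set X⋆, and the iterates are x^{k+1} = x^k − 2·((f(x^k) − f⋆)/‖∇f(x^k)‖²)·∇f(x^k) (i.e., γ = 2 Polyak gradient descent). Then for any K ≥ 1: min_{1≤k≤K} (f(x^k) − f⋆) ≤ ((ν+1)/(4ν))^ν · L_ν · dist(x⁰, X⋆)^{ν+1} / K^ν. -/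
open InnerProductSpace Set intervalIntegral Filter

variable {E : Type*} [NormedAddCommGroup E] [InnerProductSpace ℝ E] [CompleteSpace E]

lemma fderiv_apply_eq_inner {f : E → ℝ} {x : E} (h : DifferentiableAt ℝ f x) (v : E) :
    fderiv ℝ f x v = ⟪gradient f x, v⟫_ℝ := by
  have := h.hasGradientAt
  rw [hasGradientAt_iff_hasFDerivAt] at this
  rw [this.fderiv]; simp

lemma line_hasDerivAt (f : E → ℝ) (hdiff : Differentiable ℝ f) (x y : E) (t : ℝ) :
    HasDerivAt (fun s : ℝ => f (x + s • (y - x)))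
      (⟪gradient f (x + t • (y - x)), y - x⟫_ℝ) t := by
  have hline : HasDerivAt (fun s : ℝ => x + s • (y - x)) (y - x) t := by
    simpa using ((hasDerivAt_id t).smul_const (y - x)).const_add x
  have := (hdiff (x + t • (y - x))).hasFDerivAt.comp_hasDerivAt t hline
  rw [fderiv_apply_eq_inner (hdiff _)] at this; exact this

lemma grad_continuous {f : E → ℝ} {ν L : ℝ} (hν0 : 0 < ν)
    (hsmooth : ∀ x y, ‖gradient f x - gradient f y‖ ≤ L * ‖x - y‖ ^ ν) :
    Continuous (gradient f) := by
  rw [continuous_iff_continuousAt]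
  intro a
  rw [ContinuousAt, tendsto_iff_norm_sub_tendsto_zero]
  have hb : Tendsto (fun b => L * ‖b - a‖ ^ ν) (nhds a) (nhds 0) := by
    have h1 : Tendsto (fun b : E => ‖b - a‖) (nhds a) (nhds 0) := by
      simpa using tendsto_norm_sub_self a
    have h2 : ContinuousAt (fun s : ℝ => s ^ ν) 0 :=
      Real.continuousAt_rpow_const 0 ν (Or.inr hν0.le)
    have := (h2.tendsto.comp h1)
    simpa [Real.zero_rpow hν0.ne'] using this.const_mul L
  refine squeeze_zero (fun b => norm_nonneg _) (fun b => hsmooth b a) hb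

lemma descent_lemma {f : E → ℝ} {ν L : ℝ} (hν0 : 0 < ν) (hL : 0 < L)
    (hdiff : Differentiable ℝ f)
    (hsmooth : ∀ x y, ‖gradient f x - gradient f y‖ ≤ L * ‖x - y‖ ^ ν) (x y : E) :
    f y ≤ f x + ⟪gradient f x, y - x⟫_ℝ + L / (ν + 1) * ‖y - x‖ ^ (ν + 1) := by
  set ψ : ℝ → ℝ := fun t => ⟪gradient f (x + t • (y - x)), y - x⟫_ℝ with hψ
  have hψcont : Continuous ψ := by
    apply Continuous.inner
    · exact (grad_continuous hν0 hsmooth).comp (by continuity)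
    · exact continuous_const
  have hFTC : f y - f x = ∫ t in (0:ℝ)..1, ψ t := by
    have := integral_eq_sub_of_hasDerivAt (f := fun s : ℝ => f (x + s • (y - x)))
      (f' := ψ) (a := 0) (b := 1)
      (fun t _ => line_hasDerivAt f hdiff x y t)
      (hψcont.intervalIntegrable 0 1)
    rw [this]; norm_num
  -- pointwise bound on [0,1]
  have hpt : ∀ t ∈ Set.Icc (0:ℝ) 1, ψ t ≤ ψ 0 + L * t ^ ν * ‖y - x‖ ^ (ν + 1) := by
    intro t ht
    have h1 : ψ t - ψ 0 = ⟪gradient f (x + t • (y - x)) - gradient f x, y - x⟫_ℝ := by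
      simp [hψ, inner_sub_left]
    have h2 : ψ t - ψ 0 ≤ ‖gradient f (x + t • (y - x)) - gradient f x‖ * ‖y - x‖ := by
      rw [h1]; exact real_inner_le_norm _ _
    have h3 : ‖gradient f (x + t • (y - x)) - gradient f x‖ ≤ L * (t ^ ν * ‖y - x‖ ^ ν) := by
      have := hsmooth (x + t • (y - x)) x
      have he : ‖x + t • (y - x) - x‖ = t * ‖y - x‖ := by
        simp [norm_smul, abs_of_nonneg ht.1]
      rw [he] at this
      rwa [Real.mul_rpow ht.1 (norm_nonneg _)] at this
    have h4 : ‖y - x‖ ^ (ν + 1) = ‖y - x‖ ^ ν * ‖y - x‖ := by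
      rcases eq_or_ne (‖y - x‖) 0 with h|h
      · rw [h, Real.zero_rpow (by positivity), Real.zero_rpow hν0.ne', mul_zero]
      · rw [Real.rpow_add_one h]
    have h5 : L * t ^ ν * ‖y - x‖ ^ (ν + 1) = L * (t ^ ν * ‖y - x‖ ^ ν) * ‖y - x‖ := by
      rw [h4]; ring
    linarith [h2.trans (mul_le_mul_of_nonneg_right h3 (norm_nonneg (y - x)))]
  have hC : (0:ℝ) ≤ ‖y - x‖ ^ (ν + 1) := Real.rpow_nonneg (norm_nonneg _) _
  have hInt2 : IntervalIntegrable (fun t : ℝ => t ^ ν * (L * ‖y - x‖ ^ (ν + 1)))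
      MeasureTheory.volume 0 1 :=
    (intervalIntegral.intervalIntegrable_rpow (Or.inl hν0.le)).mul_const _
  have hmono : ∫ t in (0:ℝ)..1, ψ t ≤
      ∫ t in (0:ℝ)..1, (ψ 0 + t ^ ν * (L * ‖y - x‖ ^ (ν + 1))) := by
    apply intervalIntegral.integral_mono_on zero_le_one
      (hψcont.intervalIntegrable 0 1) (intervalIntegrable_const.add hInt2)
    intro t ht
    have := hpt t ht
    linarith [this]
  have hval : ∫ t in (0:ℝ)..1, (ψ 0 + t ^ ν * (L * ‖y - x‖ ^ (ν + 1))) =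
      ψ 0 + L / (ν + 1) * ‖y - x‖ ^ (ν + 1) := by
    rw [intervalIntegral.integral_add intervalIntegrable_const hInt2,
      intervalIntegral.integral_const, intervalIntegral.integral_mul_const,
      integral_rpow (Or.inl (by linarith))]
    rw [Real.one_rpow, Real.zero_rpow (by positivity)]
    field_simp
    simp only [sub_zero, one_smul, one_mul]; ring
  have hψ0 : ψ 0 = ⟪gradient f x, y - x⟫_ℝ := by simp [hψ]
  rw [hval, hψ0] at hmono
  linarith [hFTC ▸ hmono]

lemma convex_lower {f : E → ℝ} (hconv : ConvexOn ℝ Set.univ f)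
    (hdiff : Differentiable ℝ f) (x y : E) :
    f x + ⟪gradient f x, y - x⟫_ℝ ≤ f y := by
  set φ : ℝ → ℝ := fun s => f (x + s • (y - x)) with hφ
  have hφconv : ConvexOn ℝ Set.univ φ := by
    have := hconv.comp_affineMap
      (AffineMap.mk (fun s : ℝ => x + s • (y - x))
        (LinearMap.toSpanSingleton ℝ E (y - x)) ?_)
    · exact this
    · intro p v; simp [LinearMap.toSpanSingleton_apply]; module
  have hd : HasDerivAt φ (⟪gradient f x, y - x⟫_ℝ) 0 := by
    simpa using line_hasDerivAt f hdiff x y 0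
  have := hφconv.le_slope_of_hasDerivAt (Set.mem_univ (0:ℝ)) (Set.mem_univ (1:ℝ))
    one_pos hd
  rw [slope_def_field] at this
  simp only [hφ] at this
  simp only [zero_smul, add_zero, one_smul] at this
  have h1 : x + (y - x) = y := by abel
  rw [h1] at this
  linarith [this]

lemma cocoercivity {f : E → ℝ} {ν L : ℝ} (hν0 : 0 < ν) (hL : 0 < L)
    (hconv : ConvexOn ℝ Set.univ f) (hdiff : Differentiable ℝ f)
    (hsmooth : ∀ x y, ‖gradient f x - gradient f y‖ ≤ L * ‖x - y‖ ^ ν) (x y : E) :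
    f x + ⟪gradient f x, y - x⟫_ℝ + ν / (ν + 1) * L ^ (-(1:ℝ)/ν) *
      ‖gradient f x - gradient f y‖ ^ ((ν + 1)/ν) ≤ f y := by
  set g := gradient f x with hg
  set h := gradient f y with hh
  rcases eq_or_lt_of_le (norm_nonneg (g - h)) with hδ | hδ
  · rw [← hδ, Real.zero_rpow (by positivity), mul_zero, add_zero]
    exact convex_lower hconv hdiff x y
  · set δ := ‖g - h‖ with hδdef
    set t := (δ / L) ^ ((1:ℝ)/ν) with ht
    have htpos : 0 < t := Real.rpow_pos_of_pos (div_pos hδ hL) _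
    set z := y + (t / δ) • (g - h) with hz
    have hA := convex_lower hconv hdiff x z
    have hB := descent_lemma hν0 hL hdiff hsmooth y z
    have hzy : z - y = (t / δ) • (g - h) := by rw [hz]; abel
    have hnzy : ‖z - y‖ = t := by
      rw [hzy, norm_smul, Real.norm_eq_abs, abs_of_pos (div_pos htpos hδ)]
      field_simp
      exact hδdef.symm
    have hzx : z - x = (y - x) + (t / δ) • (g - h) := by rw [hz]; abel
    have hiA : ⟪g, z - x⟫_ℝ = ⟪g, y - x⟫_ℝ + (t / δ) * ⟪g, g - h⟫_ℝ := by
      rw [hzx, inner_add_right, real_inner_smul_right]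
    have hiB : ⟪h, z - y⟫_ℝ = (t / δ) * ⟪h, g - h⟫_ℝ := by
      rw [hzy, real_inner_smul_right]
    have hinner : ⟪g, g - h⟫_ℝ - ⟪h, g - h⟫_ℝ = δ ^ (2:ℕ) := by
      rw [← inner_sub_left, real_inner_self_eq_norm_sq]
    -- combine
    have hmain : f x + ⟪g, y - x⟫_ℝ + (t / δ) * (δ ^ (2:ℕ)) ≤
        f y + L / (ν + 1) * t ^ (ν + 1) := by
      rw [hnzy] at hB
      rw [hiA] at hA
      rw [hiB] at hB
      have h6 : t / δ * ⟪g, g - h⟫_ℝ - t / δ * ⟪h, g - h⟫_ℝ = t / δ * (δ ^ (2:ℕ)) := by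
        rw [← mul_sub, hinner]
      linarith [hA, hB, h6]
    have hkey : ν / (ν + 1) * L ^ (-(1:ℝ)/ν) * δ ^ ((ν + 1)/ν) =
        (t / δ) * (δ ^ (2:ℕ)) - L / (ν + 1) * t ^ (ν + 1) := by
      have hAp : (0:ℝ) < δ ^ ((1:ℝ)/ν) := Real.rpow_pos_of_pos hδ _
      have hBp : (0:ℝ) < L ^ ((1:ℝ)/ν) := Real.rpow_pos_of_pos hL _
      have ht2 : t = δ ^ ((1:ℝ)/ν) / L ^ ((1:ℝ)/ν) := by
        rw [ht, Real.div_rpow hδ.le hL.le]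
      have he1 : (1:ℝ)/ν * (ν + 1) = (ν + 1)/ν := by ring
      have htp : t ^ (ν + 1) = δ ^ ((ν+1)/ν) / L ^ ((ν+1)/ν) := by
        rw [ht, ← Real.rpow_mul (div_nonneg hδ.le hL.le), he1,
          Real.div_rpow hδ.le hL.le]
      have he2 : (ν + 1)/ν = (1:ℝ)/ν + 1 := by
        rw [add_div, div_self hν0.ne', add_comm]
      have hδp : δ ^ ((ν+1)/ν) = δ ^ ((1:ℝ)/ν) * δ := by
        rw [he2, Real.rpow_add_one hδ.ne']
      have hLp : L ^ ((ν+1)/ν) = L ^ ((1:ℝ)/ν) * L := by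
        rw [he2, Real.rpow_add_one hL.ne']
      have hLn : L ^ (-(1:ℝ)/ν) = (L ^ ((1:ℝ)/ν))⁻¹ := by
        rw [neg_div, Real.rpow_neg hL.le]
      rw [htp, hδp, hLp, hLn, ht2]
      have hν1 : (0:ℝ) < ν + 1 := by linarith
      field_simp
      ring
    rw [hkey]
    linarith [hmain]

lemma grad_zero_of_min {f : E → ℝ} (hdiff : Differentiable ℝ f) {a : E}
    (hmin : ∀ y, f a ≤ f y) : gradient f a = 0 := by
  have h1 : IsLocalMin f a := Filter.Eventually.of_forall fun y => hmin y
  have h2 : fderiv ℝ f a = 0 := h1.fderiv_eq_zero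
  have h3 : HasFDerivAt f ((toDual ℝ E) (0:E)) a := by
    rw [map_zero, ← h2]; exact (hdiff a).hasFDerivAt
  exact (hasGradientAt_iff_hasFDerivAt.mpr h3).gradient

lemma young_helper {ν L s D : ℝ} (hν0 : 0 < ν) (hν1 : ν ≤ 1) (hL : 0 < L)
    (hs : 0 ≤ s) (hD : 0 ≤ D) :
    s * D - ν / (ν + 1) * L ^ (-(1:ℝ)/ν) * s ^ ((ν + 1)/ν) ≤
      L / (ν + 1) * D ^ (ν + 1) := by
  set p := (ν + 1)/ν with hp
  set q := ν + 1 with hq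
  have hpq : p.HolderConjugate q := by
    constructor
    · rw [hp, hq, inv_one]; field_simp
    · rw [hp, hq]; positivity
    · rw [hq]; positivity
  set lam := L ^ (-(1:ℝ)/(ν+1)) with hlam
  have hlam_pos : 0 < lam := Real.rpow_pos_of_pos hL _
  have hyoung := Real.young_inequality_of_nonneg
    (mul_nonneg hlam_pos.le hs) (div_nonneg hD hlam_pos.le) hpq
  have hab : lam * s * (D / lam) = s * D := by field_simp
  rw [hab] at hyoung
  have h1 : (lam * s) ^ p / p = ν / (ν + 1) * L ^ (-(1:ℝ)/ν) * s ^ p := by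
    rw [Real.mul_rpow hlam_pos.le hs, hlam, ← Real.rpow_mul hL.le]
    have he : -(1:ℝ)/(ν+1) * p = -(1:ℝ)/ν := by
      rw [hp]; field_simp; rw [hq]
    rw [he]
    have hpinv : 1 / p = ν / (ν + 1) := by rw [hp]; rw [one_div_div]
    rw [div_eq_mul_one_div, hpinv]
    ring
  have h2 : (D / lam) ^ q / q = L / (ν + 1) * D ^ (ν + 1) := by
    rw [Real.div_rpow hD hlam_pos.le, hlam, ← Real.rpow_mul hL.le]
    have he : -(1:ℝ)/(ν+1) * q = -1 := by rw [hq]; field_simp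
    rw [he, Real.rpow_neg_one, hq]
    field_simp
  rw [h1, h2] at hyoung
  linarith

lemma universal_bound {f : E → ℝ} {ν L : ℝ} (hν0 : 0 < ν) (hν1 : ν ≤ 1) (hL : 0 < L)
    (hconv : ConvexOn ℝ Set.univ f) (hdiff : Differentiable ℝ f)
    (hsmooth : ∀ x y, ‖gradient f x - gradient f y‖ ≤ L * ‖x - y‖ ^ ν)
    {a : E} (hmin : ∀ y, f a ≤ f y) (y : E) :
    f y - f a ≤ L / (ν + 1) * ‖y - a‖ ^ (ν + 1) := by
  have hco := cocoercivity hν0 hL hconv hdiff hsmooth y a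
  rw [grad_zero_of_min hdiff hmin, sub_zero] at hco
  have hinner : ⟪gradient f y, a - y⟫_ℝ = -⟪gradient f y, y - a⟫_ℝ := by
    rw [← inner_neg_right]; congr 1; abel
  rw [hinner] at hco
  have hCS : ⟪gradient f y, y - a⟫_ℝ ≤ ‖gradient f y‖ * ‖y - a‖ := real_inner_le_norm _ _
  have hY := young_helper (s := ‖gradient f y‖) (D := ‖y - a‖) hν0 hν1 hL
    (norm_nonneg _) (norm_nonneg _)
  linarith

lemma exponent_ineq {ν : ℝ} (hν0 : 0 < ν) (hν1 : ν ≤ 1) :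
    (4 * ν) ^ ν ≤ (ν + 1) ^ (ν + 1) := by
  have h1 : (4 * ν) ^ ν ≤ ((ν + 1) ^ (2:ℝ)) ^ ν := by
    apply Real.rpow_le_rpow (by positivity) _ hν0.le
    rw [show (2:ℝ) = ((2:ℕ):ℝ) by norm_num, Real.rpow_natCast]
    nlinarith [sq_nonneg (ν - 1)]
  have h2 : ((ν + 1) ^ (2:ℝ)) ^ ν = (ν + 1) ^ (2 * ν) := by
    rw [← Real.rpow_mul (by linarith)]
  have h3 : (ν + 1) ^ (2 * ν) ≤ (ν + 1) ^ (ν + 1) :=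
    Real.rpow_le_rpow_of_exponent_le (by linarith) (by linarith)
  linarith [h1, h2 ▸ h1, h3]

set_option maxHeartbeats 2000000 in
/-- Convergence of `γ = 2` Polyak gradient descent under `(ν, L_ν)`-Hölder smoothness:
`min_{1≤k≤K} (f(x^k) − f⋆) ≤ ((ν+1)/(4ν))^ν L_ν dist(x⁰, X⋆)^{ν+1} / K^ν`. -/
theorem two_polyak_convergence
    (n : ℕ) (f : EuclideanSpace ℝ (Fin n) → ℝ)
    (hconv : ConvexOn ℝ Set.univ f) (hdiff : Differentiable ℝ f)
    (ν L : ℝ) (hν0 : 0 < ν) (hν1 : ν ≤ 1) (hL : 0 < L)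
    (hsmooth : ∀ x y, ‖gradient f x - gradient f y‖ ≤ L * ‖x - y‖ ^ ν)
    (fstar : ℝ) (X : Set (EuclideanSpace ℝ (Fin n)))
    (hX : X = {y | f y = fstar}) (hXne : X.Nonempty)
    (hlb : ∀ y, fstar ≤ f y)
    (x : ℕ → EuclideanSpace ℝ (Fin n)) (K : ℕ) (hK : 1 ≤ K)
    (hgrad : ∀ k, k ≤ K → gradient f (x k) ≠ 0)
    (hupd : ∀ k, k < K → x (k + 1) = x k -
      (2 * ((f (x k) - fstar) / ‖gradient f (x k)‖ ^ 2)) • gradient f (x k)) :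
    ∃ k, 1 ≤ k ∧ k ≤ K ∧
      f (x k) - fstar ≤ ((ν + 1) / (4 * ν)) ^ ν * L *
        (Metric.infDist (x 0) X) ^ (ν + 1) / (K : ℝ) ^ ν := by
  classical
  -- minimizer attaining the distance
  have hXclosed : IsClosed X := by
    rw [hX]; exact isClosed_eq hdiff.continuous continuous_const
  obtain ⟨a, haX, hdista⟩ := hXclosed.exists_infDist_eq_dist hXne (x 0)
  have hfa : f a = fstar := by rw [hX] at haX; exact haX
  have hminA : ∀ y, f a ≤ f y := fun y => hfa ▸ hlb y
  have hgrada : gradient f a = 0 := grad_zero_of_min hdiff hminA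
  set e : ℕ → ℝ := fun k => f (x k) - fstar with he
  set g : ℕ → EuclideanSpace ℝ (Fin n) := fun k => gradient f (x k) with hgdef
  have hepos : ∀ k, k ≤ K → 0 < e k := by
    intro k hk
    rcases lt_or_eq_of_le (hlb (x k)) with h | h
    · simpa [he] using sub_pos.mpr h
    · exfalso
      apply hgrad k hk
      apply grad_zero_of_min hdiff
      intro y; rw [← h]; exact hlb y
  have hgpos : ∀ k, k ≤ K → 0 < ‖g k‖ := fun k hk => norm_pos_iff.mpr (hgrad k hk)
  set D0 : ℝ := ‖x 0 - a‖ with hD0def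
  have hD0pos : 0 < D0 := by
    rw [hD0def, norm_pos_iff, sub_ne_zero]
    intro h0
    have := hepos 0 (Nat.zero_le K)
    rw [he] at this; simp only at this
    rw [h0, hfa] at this; linarith
  have hIDX : Metric.infDist (x 0) X = D0 := by rw [hdista, dist_eq_norm]
  set c : ℝ := ν / (ν + 1) * L ^ (-(1:ℝ)/ν) with hc
  have hcpos : 0 < c := by
    rw [hc]
    exact mul_pos (by positivity) (Real.rpow_pos_of_pos hL _)
  set p : ℝ := (ν + 1)/ν with hp
  set q : ℝ := (1 - ν)/ν with hq
  have hqnonneg : 0 ≤ q := by rw [hq]; exact div_nonneg (by linarith) hν0.le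
  -- lower bound on gradient norms
  have hgD : ∀ k, k ≤ K → e k ≤ ‖g k‖ * ‖x k - a‖ := by
    intro k hk
    have h1 := convex_lower hconv hdiff (x k) a
    have h2 : ⟪g k, a - x k⟫_ℝ = -⟪g k, x k - a⟫_ℝ := by
      rw [← inner_neg_right]; congr 1; abel
    rw [h2] at h1
    have h3 := real_inner_le_norm (g k) (x k - a)
    rw [he]; simp only
    rw [← hfa]
    linarith
  -- cocoercivity at iterates
  have hcoco : ∀ k, k ≤ K → e k + c * ‖g k‖ ^ p ≤ ⟪x k - a, g k⟫_ℝ := by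
    intro k hk
    have h1 := cocoercivity hν0 hL hconv hdiff hsmooth (x k) a
    rw [hgrada, sub_zero] at h1
    have h2 : ⟪g k, a - x k⟫_ℝ = -⟪g k, x k - a⟫_ℝ := by
      rw [← inner_neg_right]; congr 1; abel
    rw [h2] at h1
    rw [real_inner_comm]
    rw [he]; simp only
    rw [← hfa]
    rw [← hc, ← hp] at h1
    linarith
  -- per-step descent inequality
  have step : ∀ k, k < K →
      ‖x (k + 1) - a‖ ^ 2 ≤ ‖x k - a‖ ^ 2 - 4 * c * e k * (‖g k‖ ^ p / ‖g k‖ ^ 2) := by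
    intro k hklt
    have hkK : k ≤ K := hklt.le
    set γ : ℝ := 2 * ((f (x k) - fstar) / ‖g k‖ ^ 2) with hγ
    have hx1 : x (k + 1) - a = (x k - a) - γ • (g k) := by
      rw [hupd k hklt]; abel
    have hexp : ‖x (k + 1) - a‖ ^ 2 =
        ‖x k - a‖ ^ 2 - 2 * γ * ⟪x k - a, g k⟫_ℝ + γ ^ 2 * ‖g k‖ ^ 2 := by
      rw [hx1, norm_sub_sq_real, real_inner_smul_right, norm_smul,
        Real.norm_eq_abs, mul_pow, sq_abs]
      ring
    have hG2 : (0:ℝ) < ‖g k‖ ^ 2 := pow_pos (hgpos k hkK) 2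
    have hEk : 0 < e k := hepos k hkK
    have hγe : γ = 2 * e k / ‖g k‖ ^ 2 := by rw [hγ, he]; ring
    have hI := hcoco k hkK
    have hGp : (0:ℝ) ≤ ‖g k‖ ^ p := Real.rpow_nonneg (norm_nonneg _) _
    rw [hexp, hγe]
    have key : 4 * c * e k * (‖g k‖ ^ p / ‖g k‖ ^ 2) ≤
        2 * (2 * e k / ‖g k‖ ^ 2) * ⟪x k - a, g k⟫_ℝ -
          (2 * e k / ‖g k‖ ^ 2) ^ 2 * ‖g k‖ ^ 2 := by
      have halg : 2 * (2 * e k / ‖g k‖ ^ 2) * ⟪x k - a, g k⟫_ℝ -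
          (2 * e k / ‖g k‖ ^ 2) ^ 2 * ‖g k‖ ^ 2 =
          (4 * e k * ⟪x k - a, g k⟫_ℝ - 4 * e k ^ 2) / ‖g k‖ ^ 2 := by
        field_simp; ring
      rw [halg, ← mul_div_assoc]
      gcongr
      nlinarith [mul_le_mul_of_nonneg_left hI (by positivity : (0:ℝ) ≤ 4 * e k)]
    linarith
  -- nonnegativity of descent term
  have hdesc_nonneg : ∀ k, k < K → 0 ≤ 4 * c * e k * (‖g k‖ ^ p / ‖g k‖ ^ 2) := by
    intro k hklt
    have h1 := (hepos k hklt.le).le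
    have hGp : (0:ℝ) ≤ ‖g k‖ ^ p := Real.rpow_nonneg (norm_nonneg _) _
    have hG2 : (0:ℝ) < ‖g k‖ ^ 2 := pow_pos (hgpos k hklt.le) 2
    positivity
  have hmono : ∀ k, k ≤ K → ‖x k - a‖ ≤ D0 := by
    intro k
    induction k with
    | zero => intro _; rw [hD0def]
    | succ m ih =>
      intro hm
      have hmK : m < K := hm
      have h1 := step m hmK
      have h2 := ih hmK.le
      have h3 := hdesc_nonneg m hmK
      have h4 : ‖x m - a‖ ^ 2 ≤ D0 ^ 2 := pow_le_pow_left₀ (norm_nonneg _) h2 2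
      nlinarith [norm_nonneg (x (m+1) - a), hD0pos]
  -- strengthened per-step bound
  have step2 : ∀ k, k < K →
      ‖x (k + 1) - a‖ ^ 2 ≤ ‖x k - a‖ ^ 2 - 4 * c * e k * (e k / D0) ^ q := by
    intro k hklt
    have hkK : k ≤ K := hklt.le
    have hG := hgpos k hkK
    have hE := hepos k hkK
    have hGq : ‖g k‖ ^ p / ‖g k‖ ^ 2 = ‖g k‖ ^ q := by
      rw [show ‖g k‖ ^ 2 = ‖g k‖ ^ ((2:ℕ):ℝ) from (Real.rpow_natCast _ 2).symm,
        ← Real.rpow_sub hG]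
      congr 1
      rw [hp, hq]
      push_cast
      field_simp
      ring
    have hED : e k / D0 ≤ ‖g k‖ := by
      rw [div_le_iff₀ hD0pos]
      exact (hgD k hkK).trans (mul_le_mul_of_nonneg_left (hmono k hkK) (norm_nonneg _))
    have hrw : (e k / D0) ^ q ≤ ‖g k‖ ^ q :=
      Real.rpow_le_rpow (by positivity) hED hqnonneg
    have hst := step k hklt
    rw [hGq] at hst
    have h4ce : (0:ℝ) ≤ 4 * c * e k := by nlinarith [hcpos, hE]
    have hint := mul_le_mul_of_nonneg_left hrw h4ce
    exact hst.trans (sub_le_sub_left hint _)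
  -- constants
  have hKpos : (0:ℝ) < (K : ℝ) := Nat.cast_pos.mpr (by omega)
  have hK1 : (1:ℝ) ≤ (K : ℝ) := Nat.one_le_cast.mpr hK
  set B : ℝ := ((ν + 1) / (4 * ν)) ^ ν * L * D0 ^ (ν + 1) / (K : ℝ) ^ ν with hB
  set W : ℝ := (ν + 1) / (4 * ν) * L ^ ((1:ℝ)/ν) * D0 / (K : ℝ) with hW
  have hLr : (0:ℝ) < L ^ ((1:ℝ)/ν) := Real.rpow_pos_of_pos hL _
  have hWpos : 0 < W := by rw [hW]; positivity
  have hWν : W ^ ν = ((ν + 1) / (4 * ν)) ^ ν * L * D0 ^ ν / (K:ℝ) ^ ν := by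
    rw [hW, Real.div_rpow (by positivity) hKpos.le,
      Real.mul_rpow (by positivity) hD0pos.le,
      Real.mul_rpow (by positivity) hLr.le,
      ← Real.rpow_mul hL.le, one_div, inv_mul_cancel₀ hν0.ne', Real.rpow_one]
  have hBW : B = W ^ ν * D0 := by
    rw [hB, hWν, Real.rpow_add_one hD0pos.ne']
    ring
  have hBD : B / D0 = W ^ ν := by rw [hBW]; field_simp
  have hBpos : 0 < B := by
    rw [hBW]
    exact mul_pos (Real.rpow_pos_of_pos hWpos ν) hD0pos
  have hBDq : (B / D0) ^ q = W ^ (1 - ν) := by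
    rw [hBD, ← Real.rpow_mul hWpos.le]
    congr 1
    rw [hq]
    field_simp
  have hkeyEq : 4 * c * B * (B / D0) ^ q = D0 ^ 2 / (K:ℝ) := by
    rw [hBDq, hBW]
    have h1 : W ^ ν * W ^ (1 - ν) = W := by
      rw [← Real.rpow_add hWpos, show ν + (1 - ν) = 1 by ring, Real.rpow_one]
    have h2 : L ^ (-(1:ℝ)/ν) * L ^ ((1:ℝ)/ν) = 1 := by
      rw [← Real.rpow_add hL, show -(1:ℝ)/ν + 1/ν = 0 by ring, Real.rpow_zero]
    calc 4 * c * (W ^ ν * D0) * W ^ (1 - ν)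
        = 4 * c * D0 * (W ^ ν * W ^ (1 - ν)) := by ring
      _ = 4 * c * D0 * W := by rw [h1]
      _ = D0 ^ 2 / (K:ℝ) := by
          rw [hc, hW]
          have h3 : 4 * (ν / (ν + 1) * L ^ (-(1:ℝ)/ν)) * D0 *
              ((ν + 1) / (4 * ν) * L ^ ((1:ℝ)/ν) * D0 / (K:ℝ)) =
              (L ^ (-(1:ℝ)/ν) * L ^ ((1:ℝ)/ν)) *
                (4 * (ν / (ν + 1)) * ((ν + 1)/(4 * ν)) * D0 ^ 2 / (K:ℝ)) := by
            ring
          rw [h3, h2, one_mul]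
          have hν1' : (ν:ℝ) + 1 ≠ 0 := by positivity
          field_simp
  -- main case split
  by_cases hcase : ∃ k, 1 ≤ k ∧ k ≤ K ∧ e k ≤ B
  · obtain ⟨k, h1, h2, h3⟩ := hcase
    refine ⟨k, h1, h2, ?_⟩
    rw [hIDX]
    exact h3
  · exfalso
    push_neg at hcase
    have htel : ∑ k ∈ Finset.range K, (‖x k - a‖ ^ 2 - ‖x (k+1) - a‖ ^ 2) =
        D0 ^ 2 - ‖x K - a‖ ^ 2 := by
      rw [Finset.sum_range_sub' (f := fun k => ‖x k - a‖ ^ 2)]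
    have hterm_nonneg : ∀ k ∈ Finset.range K, (0:ℝ) ≤ ‖x k - a‖ ^ 2 - ‖x (k+1) - a‖ ^ 2 := by
      intro k hk
      rw [Finset.mem_range] at hk
      have := step k hk
      have := hdesc_nonneg k hk
      linarith
    have hIcoSub : Finset.Ico 1 K ⊆ Finset.range K := by
      intro k hk
      rw [Finset.mem_Ico] at hk
      rw [Finset.mem_range]
      exact hk.2
    have hlower : ∀ k ∈ Finset.Ico 1 K, D0 ^ 2 / (K:ℝ) ≤ ‖x k - a‖ ^ 2 - ‖x (k+1) - a‖ ^ 2 := by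
      intro k hk
      rw [Finset.mem_Ico] at hk
      have hBek : B ≤ e k := (hcase k hk.1 hk.2.le).le
      have hmon : 4 * c * B * (B / D0) ^ q ≤ 4 * c * e k * (e k / D0) ^ q := by
        have hq1 : (B / D0) ^ q ≤ (e k / D0) ^ q :=
          Real.rpow_le_rpow (div_nonneg hBpos.le hD0pos.le)
            ((div_le_div_iff_of_pos_right hD0pos).mpr hBek) hqnonneg
        have hBq : (0:ℝ) ≤ (B / D0) ^ q := Real.rpow_nonneg (div_nonneg hBpos.le hD0pos.le) _
        have h4c : (0:ℝ) ≤ 4 * c := by linarith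
        have hstepm := mul_le_mul_of_nonneg_left
          (mul_le_mul hBek hq1 hBq (hepos k hk.2.le).le) h4c
        calc 4 * c * B * (B / D0) ^ q = 4 * c * (B * (B / D0) ^ q) := by ring
          _ ≤ 4 * c * (e k * (e k / D0) ^ q) := hstepm
          _ = 4 * c * e k * (e k / D0) ^ q := by ring
      have := step2 k hk.2
      rw [hkeyEq] at hmon
      linarith
    have hsum1 : ∑ k ∈ Finset.Ico 1 K, (‖x k - a‖ ^ 2 - ‖x (k+1) - a‖ ^ 2) ≤
        D0 ^ 2 - ‖x K - a‖ ^ 2 := by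
      rw [← htel]
      apply Finset.sum_le_sum_of_subset_of_nonneg hIcoSub
      intro i hi _
      exact hterm_nonneg i hi
    have hsum2 : ((K:ℝ) - 1) * (D0 ^ 2 / (K:ℝ)) ≤
        ∑ k ∈ Finset.Ico 1 K, (‖x k - a‖ ^ 2 - ‖x (k+1) - a‖ ^ 2) := by
      have := Finset.card_nsmul_le_sum (Finset.Ico 1 K)
        (fun k => ‖x k - a‖ ^ 2 - ‖x (k+1) - a‖ ^ 2) (D0 ^ 2 / (K:ℝ)) hlower
      rw [Nat.card_Ico, nsmul_eq_mul] at this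
      have hc1 : ((K - 1 : ℕ) : ℝ) = (K:ℝ) - 1 := by
        rw [Nat.cast_sub hK]; norm_num
      rw [hc1] at this
      exact this
    have hdK2 : ‖x K - a‖ ^ 2 ≤ D0 ^ 2 / (K:ℝ) := by
      have hKne : (K:ℝ) ≠ 0 := hKpos.ne'
      have : D0 ^ 2 - ((K:ℝ) - 1) * (D0 ^ 2 / (K:ℝ)) = D0 ^ 2 / (K:ℝ) := by
        field_simp
        ring
      linarith [hsum1, hsum2]
    -- universal bound at x K
    have hdK : ‖x K - a‖ ≤ D0 * (K:ℝ) ^ (-(1:ℝ)/2) := by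
      have hKr : (0:ℝ) < (K:ℝ) ^ (-(1:ℝ)/2) := Real.rpow_pos_of_pos hKpos _
      have hpow : (D0 * (K:ℝ) ^ (-(1:ℝ)/2)) ^ 2 = D0 ^ 2 / (K:ℝ) := by
        rw [mul_pow, show ((K:ℝ) ^ (-(1:ℝ)/2)) ^ 2
            = ((K:ℝ) ^ (-(1:ℝ)/2)) ^ ((2:ℕ):ℝ) from (Real.rpow_natCast _ 2).symm,
          ← Real.rpow_mul hKpos.le, show (-(1:ℝ)/2) * ((2:ℕ):ℝ) = -1 by norm_num,
          Real.rpow_neg_one]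
        field_simp
      nlinarith [norm_nonneg (x K - a), hdK2, hpow, mul_pos hD0pos hKr]
    have huniv : e K ≤ L / (ν + 1) * ‖x K - a‖ ^ (ν + 1) := by
      have h := universal_bound hν0 hν1 hL hconv hdiff hsmooth hminA (x K)
      simp only [he]
      rw [← hfa]
      exact h
    have h5 : ‖x K - a‖ ^ (ν + 1) ≤ (D0 * (K:ℝ) ^ (-(1:ℝ)/2)) ^ (ν + 1) :=
      Real.rpow_le_rpow (norm_nonneg _) hdK (by linarith)
    have h6 : (D0 * (K:ℝ) ^ (-(1:ℝ)/2)) ^ (ν + 1) = D0 ^ (ν+1) * (K:ℝ) ^ (-(ν+1)/2) := by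
      rw [Real.mul_rpow hD0pos.le (Real.rpow_nonneg hKpos.le _),
        ← Real.rpow_mul hKpos.le]
      congr 2
      ring
    have h7 : (K:ℝ) ^ (-(ν+1)/2) ≤ (K:ℝ) ^ (-ν) :=
      Real.rpow_le_rpow_of_exponent_le hK1 (by linarith)
    have h8 : 1 / (ν + 1) ≤ ((ν + 1) / (4 * ν)) ^ ν := by
      rw [Real.div_rpow (by linarith) (by positivity),
        div_le_div_iff₀ (by linarith) (Real.rpow_pos_of_pos (by positivity) _)]
      have hei := exponent_ineq hν0 hν1
      rw [Real.rpow_add_one (by positivity : (ν+1:ℝ) ≠ 0)] at hei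
      linarith
    have hDK1 : (0:ℝ) ≤ D0 ^ (ν + 1) := Real.rpow_nonneg hD0pos.le _
    have hKν : (0:ℝ) < (K:ℝ) ^ ν := Real.rpow_pos_of_pos hKpos _
    have hfinal : e K ≤ B := by
      calc e K ≤ L / (ν + 1) * ‖x K - a‖ ^ (ν + 1) := huniv
        _ ≤ L / (ν + 1) * (D0 ^ (ν+1) * (K:ℝ) ^ (-(ν+1)/2)) := by
            rw [← h6]
            exact mul_le_mul_of_nonneg_left h5 (by positivity)
        _ ≤ L / (ν + 1) * (D0 ^ (ν+1) * (K:ℝ) ^ (-ν)) := by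
            exact mul_le_mul_of_nonneg_left
              (mul_le_mul_of_nonneg_left h7 hDK1) (by positivity)
        _ ≤ B := by
            rw [hB, Real.rpow_neg hKpos.le]
            have h9 : L / (ν + 1) ≤ ((ν + 1) / (4 * ν)) ^ ν * L := by
              have h10 := mul_le_mul_of_nonneg_right h8 hL.le
              calc L / (ν+1) = 1/(ν+1) * L := by ring
                _ ≤ ((ν + 1) / (4 * ν)) ^ ν * L := h10
            have hKinv : (0:ℝ) ≤ ((K:ℝ) ^ ν)⁻¹ := by positivity
            calc L / (ν + 1) * (D0 ^ (ν+1) * ((K:ℝ) ^ ν)⁻¹)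
                = (L / (ν + 1)) * D0 ^ (ν+1) * ((K:ℝ) ^ ν)⁻¹ := by ring
              _ ≤ (((ν + 1) / (4 * ν)) ^ ν * L) * D0 ^ (ν+1) * ((K:ℝ) ^ ν)⁻¹ := by
                  exact mul_le_mul_of_nonneg_right
                    (mul_le_mul_of_nonneg_right h9 hDK1) hKinv
              _ = ((ν + 1) / (4 * ν)) ^ ν * L * D0 ^ (ν + 1) / (K : ℝ) ^ ν := by
                  rw [div_eq_mul_inv (((ν + 1) / (4 * ν)) ^ ν * L * D0 ^ (ν + 1)) ((K:ℝ) ^ ν)]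
    have hcontra := hcase K hK le_rfl
    linarith
end

section
/- Suppose f: ℝⁿ → ℝ is convex, differentiable, (ν, L_ν)-Hölder smooth, satisfies the (r, ρ_r)-Hölder growth condition with r = ν+1 on the set K = ∪_{x⋆∈X⋆} B(x⋆, ‖x⁰ − x⋆‖), and let γ ∈ (0,2). Then the γ-scaled Polyak gradient descent iterates satisfy dist(x^{k+1}, X⋆)² ≤ (1 − γ(2−γ)·ν^{2ν/(ν+1)}·ρ_r^{2/(ν+1)}/((ν+1)^{2ν/(ν+1)}·L_ν^{2/(ν+1)}))·dist(x^k, X⋆)² for all k ≥ 0, where the contraction factor lies in (0,1). -/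
open Metric Set Filter Topology InnerProductSpace intervalIntegral
open scoped RealInnerProductSpace

variable {E : Type*} [NormedAddCommGroup E] [InnerProductSpace ℝ E] [CompleteSpace E]

lemma my_grad_inner (f : E → ℝ) (x v : E) :
    ⟪gradient f x, v⟫_ℝ = fderiv ℝ f x v := by
  simp [gradient, InnerProductSpace.toDual_symm_apply]

lemma my_hasDerivAt_line (f : E → ℝ) (hf : Differentiable ℝ f) (x v : E) (t : ℝ) :
    HasDerivAt (fun s : ℝ => f (x + s • v)) ⟪gradient f (x + t • v), v⟫_ℝ t := by
  have h1 : HasDerivAt (fun s : ℝ => x + s • v) v t := by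
    simpa using ((hasDerivAt_id t).smul_const v).const_add x
  have h2 := (hf (x + t • v)).hasFDerivAt.comp_hasDerivAt t h1
  rw [my_grad_inner f _ v]
  exact h2

lemma my_convex_grad_ineq (f : E → ℝ) (hconv : ConvexOn ℝ Set.univ f)
    (hf : Differentiable ℝ f) (x y : E) :
    f x + ⟪gradient f x, y - x⟫_ℝ ≤ f y := by
  have hline := my_hasDerivAt_line f hf x (y - x) 0
  simp only [zero_smul, add_zero] at hline
  have hφ : ConvexOn ℝ Set.univ (fun s : ℝ => f (x + s • (y - x))) := by
    have h := hconv.comp_affineMap (AffineMap.lineMap x y)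
    have he : (f ∘ (AffineMap.lineMap x y : ℝ →ᵃ[ℝ] E)) = fun s : ℝ => f (x + s • (y - x)) := by
      funext s
      simp only [Function.comp_apply, AffineMap.lineMap_apply_module]
      congr 1
      rw [smul_sub, sub_smul, one_smul]
      abel
    rw [he] at h
    simpa using h
  have hs := hφ.le_slope_of_hasDerivAt (mem_univ (0:ℝ)) (mem_univ (1:ℝ)) one_pos hline
  rw [slope_def_field] at hs
  simp at hs
  linarith [my_grad_inner f x (y - x), (fderiv ℝ f x).map_sub y x]

lemma my_grad_cont (f : E → ℝ) (ν L : ℝ) (hν0 : 0 < ν)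
    (hsmooth : ∀ x y, ‖gradient f x - gradient f y‖ ≤ L * ‖x - y‖ ^ ν) :
    Continuous (fun x => gradient f x) := by
  rw [continuous_iff_continuousAt]
  intro a
  rw [ContinuousAt, tendsto_iff_norm_sub_tendsto_zero]
  have hbound : Tendsto (fun b : E => L * ‖b - a‖ ^ ν) (𝓝 a) (𝓝 0) := by
    have hc : Continuous (fun b : E => L * ‖b - a‖ ^ ν) :=
      continuous_const.mul ((Real.continuous_rpow_const hν0.le).comp
        ((continuous_id.sub continuous_const).norm))
    have := hc.tendsto a
    simpa [Real.zero_rpow hν0.ne'] using this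
  exact squeeze_zero (fun b => norm_nonneg _) (fun b => hsmooth b a) hbound

lemma my_descent (f : E → ℝ) (hf : Differentiable ℝ f)
    (ν L : ℝ) (hν0 : 0 < ν) (hL : 0 < L)
    (hsmooth : ∀ x y, ‖gradient f x - gradient f y‖ ≤ L * ‖x - y‖ ^ ν)
    (x : E) (s : ℝ) (hs : 0 ≤ s) :
    f (x - s • gradient f x) ≤ f x - s * ‖gradient f x‖ ^ 2
      + L / (ν + 1) * s ^ (ν + 1) * ‖gradient f x‖ ^ (ν + 1) := by
  set g := gradient f x with hg
  set v := -g with hv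
  have hderiv : ∀ t ∈ uIcc (0:ℝ) s,
      HasDerivAt (fun u : ℝ => f (x + u • v)) ⟪gradient f (x + t • v), v⟫_ℝ t :=
    fun t _ => my_hasDerivAt_line f hf x v t
  have hcont : Continuous (fun t : ℝ => ⟪gradient f (x + t • v), v⟫_ℝ) := by
    apply Continuous.inner
    · exact (my_grad_cont f ν L hν0 hsmooth).comp
        (continuous_const.add ((continuous_id.smul continuous_const)))
    · exact continuous_const
  have hint : IntervalIntegrable (fun t : ℝ => ⟪gradient f (x + t • v), v⟫_ℝ)
      MeasureTheory.volume 0 s := hcont.intervalIntegrable 0 s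
  have hftc := intervalIntegral.integral_eq_sub_of_hasDerivAt hderiv hint
  -- pointwise bound on the derivative
  have hptw : ∀ t ∈ Icc (0:ℝ) s,
      ⟪gradient f (x + t • v), v⟫_ℝ ≤ -‖g‖^2 + L * t ^ ν * ‖g‖ ^ (ν + 1) := by
    intro t ht
    have h1 : ⟪gradient f (x + t • v), v⟫_ℝ
        = ⟪gradient f (x + t • v) - g, v⟫_ℝ + ⟪g, v⟫_ℝ := by
      rw [inner_sub_left]; ring
    have h2 : ⟪g, v⟫_ℝ = -‖g‖^2 := by
      rw [hv, inner_neg_right, real_inner_self_eq_norm_sq]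
    have h3 : ⟪gradient f (x + t • v) - g, v⟫_ℝ ≤ L * t ^ ν * ‖g‖ ^ (ν + 1) := by
      calc ⟪gradient f (x + t • v) - g, v⟫_ℝ
          ≤ ‖gradient f (x + t • v) - g‖ * ‖v‖ := real_inner_le_norm _ _
        _ ≤ (L * ‖x + t • v - x‖ ^ ν) * ‖v‖ := by
            gcongr
            exact hsmooth _ _
        _ = L * t ^ ν * ‖g‖ ^ (ν + 1) := by
            have hnv : ‖v‖ = ‖g‖ := by rw [hv, norm_neg]
            have : ‖x + t • v - x‖ = t * ‖g‖ := by
              simp [norm_smul, abs_of_nonneg ht.1, hnv]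
            rw [this, Real.mul_rpow ht.1 (norm_nonneg g), hnv,
              Real.rpow_add' (norm_nonneg g) (by positivity), Real.rpow_one]
            ring
    linarith [h1, h2, h3]
  -- integral comparison
  have hintrhs : IntervalIntegrable (fun t : ℝ => -‖g‖^2 + L * t ^ ν * ‖g‖ ^ (ν + 1))
      MeasureTheory.volume 0 s := by
    apply IntervalIntegrable.add
    · exact intervalIntegrable_const
    · exact (intervalIntegrable_rpow (Or.inl hν0.le)).const_mul L |>.mul_const _
  have hmono := intervalIntegral.integral_mono_on hs hint hintrhs hptw
  have hrhs : (∫ t in (0:ℝ)..s, (-‖g‖^2 + L * t ^ ν * ‖g‖ ^ (ν + 1)))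
      = -s * ‖g‖^2 + L / (ν + 1) * s ^ (ν + 1) * ‖g‖ ^ (ν + 1) := by
    rw [intervalIntegral.integral_add intervalIntegrable_const
      ((intervalIntegrable_rpow (Or.inl hν0.le)).const_mul L |>.mul_const _)]
    have h1 : (∫ _t in (0:ℝ)..s, -‖g‖^2) = -s * ‖g‖^2 := by
      rw [intervalIntegral.integral_const]
      simp only [smul_eq_mul, sub_zero]
      ring
    have h2 : (∫ t in (0:ℝ)..s, L * t ^ ν * ‖g‖ ^ (ν + 1))
        = L / (ν + 1) * s ^ (ν + 1) * ‖g‖ ^ (ν + 1) := by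
      have : (∫ t in (0:ℝ)..s, L * t ^ ν * ‖g‖ ^ (ν + 1))
          = (L * ‖g‖ ^ (ν + 1)) * ∫ t in (0:ℝ)..s, t ^ ν := by
        rw [← intervalIntegral.integral_const_mul]
        congr 1; funext t; ring
      rw [this, integral_rpow (Or.inl (by linarith))]
      rw [Real.zero_rpow (by positivity)]
      field_simp
      ring
    rw [h1, h2]
  have key : f (x + s • v) - f (x + (0:ℝ) • v)
      ≤ -s * ‖g‖^2 + L / (ν + 1) * s ^ (ν + 1) * ‖g‖ ^ (ν + 1) := by
    rw [← hftc]; exact hrhs ▸ hmono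
  have hx0 : x + (0:ℝ) • v = x := by simp
  have hxs : x + s • v = x - s • g := by rw [hv, smul_neg]; abel
  rw [hx0, hxs] at key
  linarith

lemma my_grad_lb (f : E → ℝ) (hf : Differentiable ℝ f)
    (ν L : ℝ) (hν0 : 0 < ν) (hL : 0 < L)
    (hsmooth : ∀ x y, ‖gradient f x - gradient f y‖ ≤ L * ‖x - y‖ ^ ν)
    (fstar : ℝ) (hlb : ∀ y, fstar ≤ f y) (x : E) :
    (ν / (ν + 1)) * L ^ (-(1:ℝ)/ν) * ‖gradient f x‖ ^ ((ν+1)/ν) ≤ f x - fstar := by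
  set g := gradient f x with hg
  rcases eq_or_ne g 0 with h0 | h0
  · rw [h0]
    have : ‖(0:E)‖ ^ ((ν+1)/ν) = 0 := by
      rw [norm_zero, Real.zero_rpow (by positivity)]
    rw [this, mul_zero]
    linarith [hlb x]
  · have hG : 0 < ‖g‖ := norm_pos_iff.mpr h0
    set G := ‖g‖ with hGdef
    set s := L ^ (-(1:ℝ)/ν) * G ^ ((1-ν)/ν) with hsdef
    have hs : 0 ≤ s := by positivity
    have hdes := my_descent f hf ν L hν0 hL hsmooth x s hs
    have e1 : s * G ^ 2 = L ^ (-(1:ℝ)/ν) * G ^ ((ν+1)/ν) := by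
      have h2 : (G:ℝ) ^ (2:ℕ) = G ^ ((2:ℕ):ℝ) := (Real.rpow_natCast G 2).symm
      rw [hsdef, h2, mul_assoc, ← Real.rpow_add hG]
      congr 1
      push_cast
      field_simp
      ring
    have e2 : L / (ν+1) * s ^ (ν+1) * G ^ (ν+1)
        = (1/(ν+1)) * L ^ (-(1:ℝ)/ν) * G ^ ((ν+1)/ν) := by
      rw [hsdef, Real.mul_rpow (by positivity) (by positivity),
        ← Real.rpow_mul hL.le, ← Real.rpow_mul hG.le]
      have hL1 : L / (ν+1) = (1/(ν+1)) * L ^ (1:ℝ) := by rw [Real.rpow_one]; ring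
      calc L / (ν+1) * (L ^ (-(1:ℝ)/ν * (ν+1)) * G ^ ((1-ν)/ν * (ν+1))) * G ^ (ν+1)
          = (1/(ν+1)) * (L ^ (1:ℝ) * L ^ (-(1:ℝ)/ν * (ν+1)))
            * (G ^ ((1-ν)/ν * (ν+1)) * G ^ (ν+1)) := by rw [hL1]; ring
        _ = (1/(ν+1)) * L ^ ((1:ℝ) + -(1:ℝ)/ν * (ν+1))
            * G ^ ((1-ν)/ν * (ν+1) + (ν+1)) := by
            rw [← Real.rpow_add hL, ← Real.rpow_add hG]
        _ = (1/(ν+1)) * L ^ (-(1:ℝ)/ν) * G ^ ((ν+1)/ν) := by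
            have ea : (1:ℝ) + -(1:ℝ)/ν * (ν+1) = -(1:ℝ)/ν := by
              field_simp
              ring
            have eb : (1-ν)/ν * (ν+1) + (ν+1) = (ν+1)/ν := by
              field_simp
              ring
            rw [ea, eb]
    rw [e1, e2] at hdes
    have hne : (ν + 1) ≠ 0 := by positivity
    calc (ν / (ν + 1)) * L ^ (-(1:ℝ)/ν) * G ^ ((ν+1)/ν)
        = L ^ (-(1:ℝ)/ν) * G ^ ((ν+1)/ν)
          - 1/(ν+1) * L ^ (-(1:ℝ)/ν) * G ^ ((ν+1)/ν) := by
          field_simp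
          ring
      _ ≤ f x - fstar := by
          have h4 := hlb (x - s • g)
          linarith [hdes, h4]



/-- Linear contraction of γ-scaled Polyak gradient descent (`γ ∈ (0,2)`) under
`(ν, L_ν)`-Hölder smoothness and `(r, ρ_r)`-Hölder growth with `r = ν + 1` on the set
`K = ∪_{x⋆∈X⋆} B(x⋆, ‖x⁰ − x⋆‖)`. -/
theorem polyak_linear_contraction
    (n : ℕ) (f : EuclideanSpace ℝ (Fin n) → ℝ)
    (hconv : ConvexOn ℝ Set.univ f) (hdiff : Differentiable ℝ f)
    (ν L ρ : ℝ) (hν0 : 0 < ν) (hν1 : ν ≤ 1) (hL : 0 < L) (hρ : 0 < ρ)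
    (hsmooth : ∀ x y, ‖gradient f x - gradient f y‖ ≤ L * ‖x - y‖ ^ ν)
    (fstar : ℝ) (X : Set (EuclideanSpace ℝ (Fin n)))
    (hX : X = {y | f y = fstar}) (hXne : X.Nonempty)
    (hlb : ∀ y, fstar ≤ f y)
    (γ : ℝ) (hγ0 : 0 < γ) (hγ2 : γ < 2)
    (x : ℕ → EuclideanSpace ℝ (Fin n))
    (hgrowth : ∀ z ∈ ⋃ xs ∈ X, Metric.closedBall xs ‖x 0 - xs‖,
      f z - fstar ≥ ρ * (Metric.infDist z X) ^ (ν + 1))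
    (hgrad : ∀ k, gradient f (x k) ≠ 0)
    (hupd : ∀ k, x (k + 1) = x k -
      (γ * ((f (x k) - fstar) / ‖gradient f (x k)‖ ^ 2)) • gradient f (x k)) :
    (0 < 1 - γ * (2 - γ) * ν ^ (2 * ν / (ν + 1)) * ρ ^ (2 / (ν + 1)) /
        ((ν + 1) ^ (2 * ν / (ν + 1)) * L ^ (2 / (ν + 1))) ∧
      1 - γ * (2 - γ) * ν ^ (2 * ν / (ν + 1)) * ρ ^ (2 / (ν + 1)) /
        ((ν + 1) ^ (2 * ν / (ν + 1)) * L ^ (2 / (ν + 1))) < 1) ∧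
    ∀ k, (Metric.infDist (x (k + 1)) X) ^ 2 ≤
      (1 - γ * (2 - γ) * ν ^ (2 * ν / (ν + 1)) * ρ ^ (2 / (ν + 1)) /
        ((ν + 1) ^ (2 * ν / (ν + 1)) * L ^ (2 / (ν + 1)))) *
      (Metric.infDist (x k) X) ^ 2 := by
  
  have hν1pos : (0:ℝ) < ν + 1 := by linarith
  have hfC : Continuous f := hdiff.continuous
  have hXclosed : IsClosed X := by
    rw [hX]; exact isClosed_eq hfC continuous_const
  have hnotin : ∀ k, x k ∉ X := by
    intro k hk
    apply hgrad k
    rw [hX, Set.mem_setOf_eq] at hk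
    have hmin : IsLocalMin f (x k) :=
      Filter.Eventually.of_forall (fun y => by rw [hk]; exact hlb y)
    have h0 := hmin.fderiv_eq_zero
    simp [gradient, h0]
  have hdpos : ∀ k, 0 < Metric.infDist (x k) X :=
    fun k => (hXclosed.notMem_iff_infDist_pos hXne).1 (hnotin k)
  have hGpos : ∀ k, (0:ℝ) < ‖gradient f (x k)‖ ^ 2 :=
    fun k => pow_pos (norm_pos_iff.mpr (hgrad k)) 2
  have hhnn : ∀ k, 0 ≤ f (x k) - fstar := fun k => by linarith [hlb (x k)]
  -- convexity inequality
  have hcvx : ∀ k, ∀ y ∈ X, f (x k) - fstar ≤ ⟪gradient f (x k), x k - y⟫_ℝ := by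
    intro k y hy
    have h := my_convex_grad_ineq f hconv hdiff (x k) y
    rw [hX, Set.mem_setOf_eq] at hy
    have hrw : ⟪gradient f (x k), y - x k⟫_ℝ = - ⟪gradient f (x k), x k - y⟫_ℝ := by
      rw [← inner_neg_right]; congr 1; abel
    rw [hy, hrw] at h
    linarith
  -- one-step decrease
  have hstep : ∀ k, ∀ y ∈ X, ‖x (k+1) - y‖^2
      ≤ ‖x k - y‖^2 - γ*(2-γ) * (f (x k) - fstar)^2 / ‖gradient f (x k)‖^2 := by
    intro k y hy
    set g := gradient f (x k) with hgdef
    set h := f (x k) - fstar with hhdef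
    set G2 := ‖g‖^2 with hG2def
    have hG2 : 0 < G2 := hGpos k
    set t := γ * (h / G2) with ht
    have hxk : x (k+1) - y = (x k - y) - t • g := by
      rw [hupd k]; abel
    have hexp : ‖(x k - y) - t • g‖^2
        = ‖x k - y‖^2 - 2*t*⟪g, x k - y⟫_ℝ + t^2*G2 := by
      rw [norm_sub_sq_real, real_inner_smul_right, norm_smul, real_inner_comm,
        hG2def]
      rw [mul_pow, Real.norm_eq_abs, sq_abs]
      ring
    have hcv := hcvx k y hy
    have htnn : 0 ≤ t := mul_nonneg hγ0.le (div_nonneg (hhnn k) hG2.le)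
    have h1 : 2*t*h ≤ 2*t*⟪g, x k - y⟫_ℝ := by
      apply mul_le_mul_of_nonneg_left hcv
      linarith
    have h2 : t * h = γ * h^2 / G2 := by
      rw [ht]; field_simp
    have h3 : t^2 * G2 = γ^2 * h^2 / G2 := by
      rw [ht]; field_simp
    have h4 : γ*(2-γ)*h^2/G2 = 2*(γ*h^2/G2) - γ^2*h^2/G2 := by ring
    rw [hxk, hexp]
    have h5 : 2*t*h = 2*(γ*h^2/G2) := by rw [mul_assoc, h2]
    nlinarith [h1, h3, h4, h5]
  -- Fejér monotonicity
  have hfejer : ∀ y ∈ X, ∀ k, ‖x k - y‖ ≤ ‖x 0 - y‖ := by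
    intro y hy k
    induction k with
    | zero => exact le_refl _
    | succ k ih =>
      have hk := hstep k y hy
      have hterm : 0 ≤ γ*(2-γ) * (f (x k) - fstar)^2 / ‖gradient f (x k)‖^2 := by
        apply div_nonneg _ (hGpos k).le
        apply mul_nonneg (mul_nonneg hγ0.le (by linarith)) (sq_nonneg _)
      have hle : ‖x (k+1) - y‖^2 ≤ ‖x k - y‖^2 := by linarith
      have hsq := Real.sqrt_le_sqrt hle
      rw [Real.sqrt_sq (norm_nonneg _), Real.sqrt_sq (norm_nonneg _)] at hsq
      exact hsq.trans ih
  obtain ⟨xs0, hxs0⟩ := hXne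
  have hK : ∀ k, x k ∈ ⋃ xs ∈ X, Metric.closedBall xs ‖x 0 - xs‖ := by
    intro k
    refine Set.mem_iUnion₂.mpr ⟨xs0, hxs0, ?_⟩
    rw [Metric.mem_closedBall, dist_eq_norm]
    exact hfejer xs0 hxs0 k
  have hhpos : ∀ k, 0 < f (x k) - fstar := by
    intro k
    have hgk := hgrowth (x k) (hK k)
    have : 0 < ρ * (Metric.infDist (x k) X) ^ (ν+1) :=
      mul_pos hρ (Real.rpow_pos_of_pos (hdpos k) _)
    linarith
  set e := 2*ν/(ν+1) with he
  set e2 := 2/(ν+1) with he2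
  have hepos : 0 < e := by rw [he]; positivity
  have he2pos : 0 < e2 := by rw [he2]; positivity
  -- ratio lower bound
  have hratio : ∀ k, (ν^e * ρ^e2 / ((ν+1)^e * L^e2)) * (Metric.infDist (x k) X)^2
      ≤ (f (x k) - fstar)^2 / ‖gradient f (x k)‖^2 := by
    intro k
    set g := gradient f (x k) with hgdef
    set h := f (x k) - fstar with hhdef
    set d := Metric.infDist (x k) X with hddef
    have hh : 0 < h := hhpos k
    have hd : 0 < d := hdpos k
    have hG : 0 < ‖g‖ := norm_pos_iff.mpr (hgrad k)
    have hG2 : 0 < ‖g‖^2 := hGpos k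
    set a := (ν / (ν + 1)) * L ^ (-(1:ℝ)/ν) with ha
    have hapos : 0 < a := by rw [ha]; positivity
    have hA : a * ‖g‖ ^ ((ν+1)/ν) ≤ h :=
      my_grad_lb f hdiff ν L hν0 hL hsmooth fstar hlb (x k)
    -- raise to power e
    have hB := Real.rpow_le_rpow (by positivity) hA hepos.le
    rw [Real.mul_rpow hapos.le (by positivity),
      ← Real.rpow_mul (norm_nonneg g)] at hB
    have hexp1 : (ν+1)/ν * e = ((2:ℕ):ℝ) := by
      rw [he]; push_cast; field_simp
    rw [hexp1, Real.rpow_natCast] at hB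
    -- hB : a ^ e * ‖g‖ ^ 2 ≤ h ^ e
    -- growth bound
    have hgrow := hgrowth (x k) (hK k)
    rw [← hhdef, ← hddef] at hgrow
    have hC := Real.rpow_le_rpow (by positivity) hgrow he2pos.le
    rw [Real.mul_rpow hρ.le (by positivity), ← Real.rpow_mul hd.le] at hC
    have hexp2 : (ν+1) * e2 = ((2:ℕ):ℝ) := by
      rw [he2]; push_cast; field_simp
    rw [hexp2, Real.rpow_natCast] at hC
    -- hC : ρ ^ e2 * d ^ 2 ≤ h ^ e2
    -- h^2 = h^e * h^e2
    have hh2 : h^(2:ℕ) = h^e * h^e2 := by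
      rw [← Real.rpow_add hh, ← Real.rpow_natCast h 2]
      congr 1
      rw [he, he2]; push_cast; field_simp
    -- a^e value
    have haval : a^e = ν^e / ((ν+1)^e * L^e2) := by
      rw [ha, Real.mul_rpow (by positivity) (by positivity),
        Real.div_rpow hν0.le hν1pos.le, ← Real.rpow_mul hL.le]
      have : -(1:ℝ)/ν * e = -e2 := by
        rw [he, he2]; field_simp
      rw [this, Real.rpow_neg hL.le]
      field_simp
    calc (ν^e * ρ^e2 / ((ν+1)^e * L^e2)) * d^2
        = a^e * (ρ^e2 * d^2) := by rw [haval]; ring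
      _ ≤ a^e * h^e2 := by
          apply mul_le_mul_of_nonneg_left hC (by positivity)
      _ = (a^e * ‖g‖^2) * h^e2 / ‖g‖^2 := by
          field_simp
      _ ≤ h^e * h^e2 / ‖g‖^2 := by
          gcongr
      _ = h^2 / ‖g‖^2 := by rw [← hh2]
  -- main inequality
  have hmain : ∀ k, (Metric.infDist (x (k+1)) X)^2
      ≤ (1 - γ*(2-γ)*ν^e*ρ^e2/((ν+1)^e*L^e2)) * (Metric.infDist (x k) X)^2 := by
    intro k
    obtain ⟨y, hyX, hyd⟩ := hXclosed.exists_infDist_eq_dist ⟨xs0, hxs0⟩ (x k)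
    have hd1 : Metric.infDist (x (k+1)) X ≤ ‖x (k+1) - y‖ := by
      rw [← dist_eq_norm]; exact Metric.infDist_le_dist_of_mem hyX
    have hd1sq : (Metric.infDist (x (k+1)) X)^2 ≤ ‖x (k+1) - y‖^2 :=
      pow_le_pow_left₀ Metric.infDist_nonneg hd1 2
    have hdk : ‖x k - y‖ = Metric.infDist (x k) X := by
      rw [← dist_eq_norm]; exact hyd.symm
    have hk := hstep k y hyX
    have hr := hratio k
    have hcoef : 0 ≤ γ*(2-γ) := mul_nonneg hγ0.le (by linarith)
    have h6 := mul_le_mul_of_nonneg_left hr hcoef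
    calc (Metric.infDist (x (k+1)) X)^2
        ≤ ‖x (k+1) - y‖^2 := hd1sq
      _ ≤ ‖x k - y‖^2 - γ*(2-γ) * (f (x k) - fstar)^2 / ‖gradient f (x k)‖^2 := hk
      _ ≤ (Metric.infDist (x k) X)^2
          - γ*(2-γ) * ((ν^e * ρ^e2 / ((ν+1)^e * L^e2)) * (Metric.infDist (x k) X)^2) := by
          rw [hdk]
          have : γ*(2-γ) * (f (x k) - fstar)^2 / ‖gradient f (x k)‖^2
              = γ*(2-γ) * ((f (x k) - fstar)^2 / ‖gradient f (x k)‖^2) := by ring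
          rw [this]
          linarith [h6]
      _ = (1 - γ*(2-γ)*ν^e*ρ^e2/((ν+1)^e*L^e2)) * (Metric.infDist (x k) X)^2 := by
          ring
  refine ⟨⟨?_, ?_⟩, hmain⟩
  · have h0 := hmain 0
    have hp1 : 0 < (Metric.infDist (x 1) X)^2 := pow_pos (hdpos 1) 2
    have hp0 : 0 < (Metric.infDist (x 0) X)^2 := pow_pos (hdpos 0) 2
    nlinarith [h0, hp1, hp0]
  · have hcpos : 0 < γ*(2-γ)*ν^e*ρ^e2/((ν+1)^e*L^e2) := by
      apply div_pos
      · apply mul_pos (mul_pos (mul_pos hγ0 (by linarith)) (Real.rpow_pos_of_pos hν0 e))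
          (Real.rpow_pos_of_pos hρ e2)
      · exact mul_pos (Real.rpow_pos_of_pos hν1pos e) (Real.rpow_pos_of_pos hL e2)
    linarith
end
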